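/- arXiv:2212.12754 — 8 statements merged into one kernel-verified Lean document; each statement's English description precedes it below -/
import Mathlib

section
/- Let q be a prime power and let F ∈ 𝔽_q[x] be a polynomial of degree k ≥ 1 with constant term zero. Suppose the number of roots of F in 𝔽_q is coprime to q. Then there exists a real constant t < q such that for every positive integer n, any set A of polynomials of degree less than n in 𝔽_q[x], with the property that there do not exist distinct p₁, p₂ ∈ A and b ∈ 𝔽_q[x] with p₁ − p₂ = F(b), satisfies |A| ≤ 2·tⁿ. -/
/-
Croot–Lev–Pach polynomial method. Identify a polynomial of degree `< n` with its coefficient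
vector in `K^n`, let `k = deg F` and `m = ⌈n / k⌉`, and let `M x y ∈ K` count the `b` of degree
`< m` with `F(b) = x - y`. On `A` the matrix `M` is diagonal, and its diagonal entry is the
number of roots of `F`, a unit of `K` by coprimality; so `M` has rank `#A` there.

The coefficients of `F(b)` are polynomials of degree `≤ k` in the `m` coefficients of `b`, and
a polynomial of degree `< (q - 1) m` sums to zero over `K^m`. Hence `M x y` is a polynomial in
`x - y` all of whose monomials of degree `≤ q - 1` in each variable have total degree at most
`D ≈ (q - 1) (n - n / k²)`. Expanding `(x - y)^α` into terms `x^β y^γ`, one of `β`, `γ` has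
degree `≤ D / 2`, which bounds the rank by twice the number of such exponent vectors. Since
`D / 2` is a fixed fraction below the mean `(q - 1) n / 2` of the degree of a uniformly random
`β ∈ [0, q)^n`, an exponential moment bound shows that this number is at most `t^n` with `t < q`.
-/

open Finset Polynomial

theorem card_le_card_of_eq_sum_mul {K X ι : Type*} [Field K] (A : Finset X) (I : Finset ι)
    (M : X → X → K) (f g : ι → X → K)
    (hM : ∀ x ∈ A, ∀ y ∈ A, M x y = ∑ i ∈ I, f i x * g i y)
    (hdiag : ∀ x ∈ A, M x x ≠ 0) (hoff : ∀ x ∈ A, ∀ y ∈ A, x ≠ y → M x y = 0) :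
    #A ≤ #I := by
  classical
  have hfactor : Matrix.diagonal (fun x : A => M x x) =
      Matrix.of (fun (x : A) (i : I) => f i x) * Matrix.of (fun (i : I) (y : A) => g i y) := by
    ext x y
    simp only [Matrix.mul_apply, Matrix.diagonal_apply, Matrix.of_apply]
    rw [Finset.sum_coe_sort I (fun i => f i x * g i y), ← hM x x.2 y y.2]
    split_ifs with hxy
    · rw [hxy]
    · exact (hoff x x.2 y y.2 (Subtype.coe_injective.ne hxy)).symm
  calc #A = (Matrix.diagonal fun x : A => M x x).rank := by
        simp [Matrix.rank_diagonal, hdiag]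
    _ ≤ #I := by
        rw [hfactor]
        exact (Matrix.rank_mul_le_left _ _).trans
          ((Matrix.rank_le_card_width _).trans_eq (Fintype.card_coe I))

theorem exists_sum_mul_eq_sum_disjSum {R X Y ι κ : Type*} [CommSemiring R]
    (T : Finset ι) (L : Finset κ) (a b : ι → κ) (c : ι → R) (φ : κ → X → R) (ψ : κ → Y → R)
    (hT : ∀ i ∈ T, a i ∈ L ∨ b i ∈ L) :
    ∃ (f : κ ⊕ κ → X → R) (g : κ ⊕ κ → Y → R), ∀ x y,
      ∑ i ∈ T, c i * φ (a i) x * ψ (b i) y = ∑ j ∈ L.disjSum L, f j x * g j y := by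
  classical
  -- Terms with `a i ∈ L` are grouped by `a i`, the remaining ones by `b i`.
  refine ⟨Sum.elim φ fun β x => ∑ i ∈ T with a i ∉ L ∧ b i = β, c i * φ (a i) x,
    Sum.elim (fun α y => ∑ i ∈ T with a i = α, c i * ψ (b i) y) ψ, fun x y => ?_⟩
  have hleft : ∀ i ∈ T.filter (a · ∈ L), a i ∈ L := fun i hi => (mem_filter.mp hi).2
  have hright : ∀ i ∈ T.filter (a · ∉ L), b i ∈ L := fun i hi =>
    ((hT i (mem_filter.mp hi).1).resolve_left (mem_filter.mp hi).2)
  rw [sum_disjSum, ← sum_filter_add_sum_filter_not T (a · ∈ L),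
    ← sum_fiberwise_of_maps_to hleft, ← sum_fiberwise_of_maps_to hright]
  simp only [Sum.elim_inl, Sum.elim_inr, mul_sum, sum_mul, filter_filter]
  congr 1 <;> refine sum_congr rfl fun β hβ => ?_
  · refine sum_congr (filter_congr fun i _ => and_iff_right_of_imp (· ▸ hβ)) fun i hi => ?_
    rw [(mem_filter.mp hi).2]
    ring
  · refine sum_congr rfl fun i hi => ?_
    rw [(mem_filter.mp hi).2.2]

theorem prod_sub_pow_eq_sum {R ι : Type*} [CommRing R] [Fintype ι] [DecidableEq ι]
    (α : ι → ℕ) (u v : ι → R) :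
    ∏ i, (u i - v i) ^ α i = ∑ β ∈ Fintype.piFinset fun i => range (α i + 1),
      (∏ i, (-1) ^ (α i - β i) * ((α i).choose (β i) : R)) *
        (∏ i, u i ^ β i) * ∏ i, v i ^ (α i - β i) := by
  have hbinom : ∀ i, (u i - v i) ^ α i = ∑ b ∈ range (α i + 1),
      (-1) ^ (α i - b) * ((α i).choose b : R) * (u i ^ b * v i ^ (α i - b)) := fun i => by
    rw [sub_eq_add_neg, add_pow]
    refine sum_congr rfl fun b _ => ?_
    rw [neg_pow]
    ring
  simp only [hbinom, prod_univ_sum, ← prod_mul_distrib]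
  refine sum_congr rfl fun β _ => prod_congr rfl fun i _ => by ring

def lowExponents (q n D : ℕ) : Finset (Fin n → ℕ) :=
  {β ∈ Fintype.piFinset fun _ => range q | 2 * ∑ i, β i ≤ D}

theorem card_le_two_mul_card_lowExponents {K X : Type*} [Field K] {q n D : ℕ}
    (Φ : (Fin n → K) → K) (W : (Fin n → ℕ) → K)
    (hΦ : ∀ d, Φ d = ∑ α ∈ Fintype.piFinset (fun _ => range q), W α * ∏ i, d i ^ α i)
    (hW : ∀ α ∈ Fintype.piFinset (fun _ => range q), W α ≠ 0 → ∑ i, α i ≤ D)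
    (hΦ0 : Φ 0 ≠ 0) (A : Finset X) (u : X → Fin n → K)
    (hoff : ∀ x ∈ A, ∀ y ∈ A, x ≠ y → Φ (u x - u y) = 0) :
    #A ≤ 2 * #(lowExponents q n D) := by
  classical
  set T := {α ∈ Fintype.piFinset (fun _ : Fin n => range q) | W α ≠ 0}.sigma
    fun α : Fin n → ℕ => Fintype.piFinset fun i => range (α i + 1)
  have hexpand : ∀ d e : Fin n → K, Φ (d - e) = ∑ P ∈ T,
      W P.1 * (∏ i, (-1) ^ (P.1 i - P.2 i) * ((P.1 i).choose (P.2 i) : K)) *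
        (∏ i, d i ^ P.2 i) * ∏ i, e i ^ (P.1 i - P.2 i) := fun d e => by
    rw [hΦ, sum_sigma, ← sum_filter_of_ne (p := fun α => W α ≠ 0)
      fun α _ hα => left_ne_zero_of_mul hα]
    refine sum_congr rfl fun α _ => ?_
    simp only [Pi.sub_apply, prod_sub_pow_eq_sum, mul_sum, mul_assoc]
  have hsplit : ∀ P ∈ T, P.2 ∈ lowExponents q n D ∨
      (fun i => P.1 i - P.2 i) ∈ lowExponents q n D := fun P hP => by
    simp only [T, mem_sigma, mem_filter, Fintype.mem_piFinset, mem_range] at hP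
    obtain ⟨⟨hαq, hW0⟩, hβα⟩ := hP
    have hsum := hW P.1 (Fintype.mem_piFinset.mpr fun i => mem_range.mpr (hαq i)) hW0
    have hadd : ∑ i, P.2 i + ∑ i, (P.1 i - P.2 i) = ∑ i, P.1 i := by
      rw [← sum_add_distrib]
      exact sum_congr rfl fun i _ => by have := hβα i; omega
    simp only [lowExponents, mem_filter, Fintype.mem_piFinset, mem_range]
    by_cases h : 2 * ∑ i, P.2 i ≤ D
    · exact .inl ⟨fun i => by have := hβα i; have := hαq i; omega, h⟩
    · exact .inr ⟨fun i => by have := hαq i; omega, by omega⟩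
  obtain ⟨f, g, hfg⟩ := exists_sum_mul_eq_sum_disjSum T (lowExponents q n D) (·.2)
    (fun P i => P.1 i - P.2 i) _ (fun β x => ∏ i, u x i ^ β i) (fun β y => ∏ i, u y i ^ β i) hsplit
  calc #A ≤ #((lowExponents q n D).disjSum (lowExponents q n D)) :=
        card_le_card_of_eq_sum_mul A _ (fun x y => Φ (u x - u y)) f g
          (fun x _ y _ => (hexpand _ _).trans (hfg x y)) (fun x _ => by simpa using hΦ0) hoff
    _ = 2 * #(lowExponents q n D) := by rw [card_disjSum, two_mul]

theorem MvPolynomial.exists_one_sub_sub_pow_eq_sum {R σ : Type*} [CommRing R]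
    (E : MvPolynomial σ R) (N : ℕ) :
    ∃ H : ℕ → MvPolynomial σ R, (∀ a, (H a).totalDegree ≤ (N - a) * E.totalDegree) ∧
      ∀ c u, 1 - (eval c E - u) ^ N = ∑ a ∈ range (N + 1), eval c (H a) * u ^ a := by
  classical
  refine ⟨fun a => (if a = 0 then 1 else 0) - C ((-1) ^ a * (N.choose a : R)) * E ^ (N - a),
    fun a => ?_, fun c u => ?_⟩
  · refine (totalDegree_sub _ _).trans (max_le ?_ ?_)
    · split_ifs <;> simp
    · refine (totalDegree_mul _ _).trans ?_
      rw [totalDegree_C, zero_add]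
      exact totalDegree_pow _ _
  · simp only [map_sub, map_mul, map_pow, eval_C, apply_ite (eval c), map_one, map_zero,
      sub_mul, sum_sub_distrib, ite_mul, one_mul, zero_mul, sum_ite_eq', mem_range,
      Nat.zero_lt_succ, if_true, pow_zero]
    rw [sub_eq_neg_add _ u, add_pow]
    congr 1
    refine sum_congr rfl fun a _ => ?_
    rw [neg_pow]
    ring

theorem MvPolynomial.exists_card_fiber_eq_sum {K σ ι : Type*} [Field K] [Fintype K]
    [DecidableEq K] [Fintype σ] [DecidableEq σ] [Fintype ι] [DecidableEq ι] {q : ℕ}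
    (hq : Fintype.card K = q)
    (E : ι → MvPolynomial σ K) {k : ℕ} (hE : ∀ i, (E i).totalDegree ≤ k) :
    ∃ W : (ι → ℕ) → K,
      (∀ α, W α ≠ 0 → (q - 1) * Fintype.card σ ≤ k * ∑ i, (q - 1 - α i)) ∧
      ∀ d : ι → K, (#{c | (fun i => eval c (E i)) = d} : K) =
        ∑ α ∈ Fintype.piFinset fun _ => range q, W α * ∏ i, d i ^ α i := by
  subst hq
  choose H hHdeg hHeq using fun i => exists_one_sub_sub_pow_eq_sum (E i) (Fintype.card K - 1)
  refine ⟨fun α => ∑ c, eval c (∏ i, H i (α i)), fun α hα => ?_, fun d => ?_⟩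
  · contrapose! hα
    refine sum_eval_eq_zero _ ?_
    calc (∏ i, H i (α i)).totalDegree ≤ ∑ i, (H i (α i)).totalDegree := totalDegree_finsetProd _ _
      _ ≤ ∑ i, (Fintype.card K - 1 - α i) * k :=
          sum_le_sum fun i _ => (hHdeg i _).trans (Nat.mul_le_mul_left _ (hE i))
      _ = k * ∑ i, (Fintype.card K - 1 - α i) := by rw [mul_sum]; simp only [mul_comm]
      _ < _ := hα
  · have hindicator : ∀ c : σ → K, (if (fun i => eval c (E i)) = d then 1 else 0 : K) =
        ∏ i, (1 - (eval c (E i) - d i) ^ (Fintype.card K - 1)) := fun c => by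
      rw [← show eval (fun i => eval c (E i)) (indicator d) =
        ∏ i, (1 - (eval c (E i) - d i) ^ (Fintype.card K - 1)) by simp [indicator]]
      split_ifs with h
      · rw [← h, eval_indicator_apply_eq_one]
      · rw [eval_indicator_apply_eq_zero _ _ h]
    have hrange : Fintype.card K - 1 + 1 = Fintype.card K := Nat.sub_add_cancel Fintype.card_pos
    simp only [natCast_card_filter, hindicator, hHeq, hrange, prod_univ_sum, map_prod,
      prod_mul_distrib, sum_mul]
    exact sum_comm

namespace Polynomial

theorem map_ofFn {R S : Type*} [Semiring R] [Semiring S] [DecidableEq R] [DecidableEq S]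
    (f : R →+* S) {n : ℕ} (v : Fin n → R) : (ofFn n v).map f = ofFn n (f ∘ v) := by
  ext i
  rw [coeff_map]
  by_cases hi : i < n
  · simp [hi]
  · simp [not_lt.mp hi]

theorem ofFn_pi_single_zero {R : Type*} [Semiring R] [DecidableEq R] {n : ℕ} (hn : 0 < n)
    (a : R) : ofFn n (Pi.single ⟨0, hn⟩ a) = C a := by
  ext i
  rw [coeff_C]
  by_cases hi : i < n
  · simp [ofFn_coeff_eq_val_of_lt _ hi, Pi.single_apply, Fin.ext_iff]
  · rw [ofFn_coeff_eq_zero_of_ge _ (not_lt.mp hi), if_neg (by omega)]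

theorem eq_of_toFn_eq {R : Type*} [Semiring R] {n : ℕ} {p p' : R[X]} (hp : p.degree < n)
    (hp' : p'.degree < n) (h : toFn n p = toFn n p') : p = p' := by
  ext i
  by_cases hi : i < n
  · exact congrFun h ⟨i, hi⟩
  · rw [coeff_eq_zero_of_degree_lt (hp.trans_le (by exact_mod_cast not_lt.mp hi)),
      coeff_eq_zero_of_degree_lt (hp'.trans_le (by exact_mod_cast not_lt.mp hi))]

theorem totalDegree_coeff_pow_le {R σ : Type*} [CommSemiring R] {P : (MvPolynomial σ R)[X]}
    {d : ℕ} (hP : ∀ i, (P.coeff i).totalDegree ≤ d) (l i : ℕ) :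
    ((P ^ l).coeff i).totalDegree ≤ l * d := by
  induction l generalizing i with
  | zero =>
    rw [pow_zero, coeff_one]
    split_ifs <;> simp
  | succ l ih =>
    rw [pow_succ, coeff_mul, Nat.succ_mul]
    refine (MvPolynomial.totalDegree_finsetSum_le fun x _ => ?_)
    exact (MvPolynomial.totalDegree_mul _ _).trans (add_le_add (ih _) (hP _))

theorem totalDegree_coeff_map_C_comp_le {R σ : Type*} [CommSemiring R] (F : R[X])
    {P : (MvPolynomial σ R)[X]} {d : ℕ} (hP : ∀ i, (P.coeff i).totalDegree ≤ d) (i : ℕ) :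
    (((F.map MvPolynomial.C).comp P).coeff i).totalDegree ≤ F.natDegree * d := by
  rw [comp, eval₂_eq_sum_range, finsetSum_coeff]
  refine MvPolynomial.totalDegree_finsetSum_le fun l hl => ?_
  rw [coeff_C_mul, coeff_map]
  refine (MvPolynomial.totalDegree_mul _ _).trans ?_
  rw [MvPolynomial.totalDegree_C, zero_add]
  refine (totalDegree_coeff_pow_le hP l i).trans (Nat.mul_le_mul_right _ ?_)
  exact Nat.le_of_lt_succ ((mem_range.mp hl).trans_le (Nat.succ_le_succ natDegree_map_le))

theorem totalDegree_coeff_ofFn_X_le {R : Type*} [CommSemiring R] [DecidableEq R] (m i : ℕ) :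
    ((ofFn m MvPolynomial.X : (MvPolynomial (Fin m) R)[X]).coeff i).totalDegree ≤ 1 := by
  by_cases hi : i < m
  · rw [ofFn_coeff_eq_val_of_lt _ hi]
    exact (MvPolynomial.totalDegree_monomial_le _ _).trans (by simp)
  · rw [ofFn_coeff_eq_zero_of_ge _ (not_lt.mp hi), MvPolynomial.totalDegree_zero]
    exact zero_le_one

theorem card_filter_comp_ofFn_eq_zero {K : Type*} [Field K] [Fintype K] [DecidableEq K]
    {F : K[X]} (hF : 0 < F.natDegree) {m : ℕ} (hm : 0 < m) :
    #{c : Fin m → K | F.comp (ofFn m c) = 0} = #{a | F.eval a = 0} := by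
  have hF0 : F ≠ 0 := ne_zero_of_natDegree_gt hF
  have hcomp : ∀ c : Fin m → K, F.comp (ofFn m c) = 0 ↔
      F.eval (c ⟨0, hm⟩) = 0 ∧ ofFn m c = C (c ⟨0, hm⟩) := fun c => by
    rw [comp_eq_zero_iff, ofFn_coeff_eq_val_of_lt _ hm, or_iff_right hF0]
  refine card_nbij' (· ⟨0, hm⟩) (fun a => Pi.single ⟨0, hm⟩ a) (fun c hc => ?_) (fun a ha => ?_)
    (fun c hc => ?_) (fun a _ => by simp)
  · simp only [coe_filter, mem_univ, true_and, Set.mem_ofPred_eq, hcomp] at hc ⊢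
    exact hc.1
  · simp only [coe_filter, mem_univ, true_and, Set.mem_ofPred_eq] at ha ⊢
    rw [ofFn_pi_single_zero, comp_C, ha, map_zero]
  · simp only [coe_filter, mem_univ, true_and, Set.mem_ofPred_eq, hcomp] at hc
    exact injective_ofFn m (by rw [ofFn_pi_single_zero, hc.2])

end Polynomial

theorem card_le_two_mul_card_lowExponents_of_sub_eq_comp {K : Type*} [Field K] [Fintype K]
    [DecidableEq K] {q : ℕ} (hq : Fintype.card K = q) {F : K[X]} (hF : 0 < F.natDegree)
    (hroots : (#{a | F.eval a = 0} : K) ≠ 0) {m n : ℕ} (hm : 0 < m)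
    (hmn : F.natDegree * (m - 1) < n) (A : Finset K[X]) (hA : ∀ p ∈ A, p.degree < n)
    (hfree : ∀ p₁ ∈ A, ∀ p₂ ∈ A, ∀ b, p₁ - p₂ = F.comp b → p₁ = p₂) :
    #A ≤ 2 * #(lowExponents q n ((q - 1) * (F.natDegree * n - m) / F.natDegree)) := by
  -- `E i` is the `i`-th coefficient of `F(b)` as a polynomial in the coefficients of `b`.
  set E : Fin n → MvPolynomial (Fin m) K :=
    fun i => ((F.map MvPolynomial.C).comp (ofFn m MvPolynomial.X)).coeff i
  have hE : ∀ c, (fun i => MvPolynomial.eval c (E i)) = toFn n (F.comp (ofFn m c)) := fun c => by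
    ext i
    have hC : (MvPolynomial.eval c).comp MvPolynomial.C = RingHom.id K := by ext; simp
    have hX : (MvPolynomial.eval c ∘ MvPolynomial.X : Fin m → K) = c := by ext; simp
    rw [← coeff_map, Polynomial.map_comp, Polynomial.map_map, Polynomial.map_ofFn, hC,
      Polynomial.map_id, hX]
    rfl
  obtain ⟨W, hWdeg, hW⟩ := MvPolynomial.exists_card_fiber_eq_sum hq E fun i =>
    (totalDegree_coeff_map_C_comp_le F (totalDegree_coeff_ofFn_X_le m) i).trans_eq (mul_one _)
  have hfiber : ∀ p : K[X], p.degree < n → ∀ c,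
      toFn n (F.comp (ofFn m c)) = toFn n p ↔ F.comp (ofFn m c) = p := fun p hp c => by
    refine ⟨eq_of_toFn_eq ?_ hp, congrArg _⟩
    refine degree_le_natDegree.trans_lt (WithBot.coe_lt_coe.mpr ?_)
    refine natDegree_comp_le.trans_lt (lt_of_le_of_lt (Nat.mul_le_mul_left _ ?_) hmn)
    exact Nat.le_sub_one_of_lt (ofFn_natDegree_lt hm c)
  refine card_le_two_mul_card_lowExponents
    (fun d => (#{c | (fun i => MvPolynomial.eval c (E i)) = d} : K)) W hW
    (fun α hα hWα => ?_) ?_ A (toFn n) fun x hx y hy hxy => ?_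
  · have hsum : ∑ i, (q - 1 - α i) + ∑ i, α i = (q - 1) * n := by
      rw [← sum_add_distrib, Fintype.sum_congr _ (fun _ => q - 1) fun i => Nat.sub_add_cancel
        (Nat.le_sub_one_of_lt (mem_range.mp (Fintype.mem_piFinset.mp hα i)))]
      simp [mul_comm]
    have hexpand : (q - 1) * (F.natDegree * n) =
        F.natDegree * ∑ i, (q - 1 - α i) + F.natDegree * ∑ i, α i := by
      rw [← mul_add, hsum]
      ring
    have := hWdeg α hWα
    rw [Fintype.card_fin] at this
    rw [Nat.le_div_iff_mul_le hF, Nat.mul_sub, hexpand, mul_comm (∑ i, α i)]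
    omega
  · have hzero : #{c | (fun i => MvPolynomial.eval c (E i)) = 0} =
        #{c : Fin m → K | F.comp (ofFn m c) = 0} := by
      refine congrArg card (filter_congr fun c _ => ?_)
      rw [hE, ← map_zero (toFn n), hfiber 0 (by simp) c]
    show (#{c | (fun i => MvPolynomial.eval c (E i)) = 0} : K) ≠ 0
    rwa [hzero, card_filter_comp_ofFn_eq_zero hF hm]
  · show (#{c | (fun i => MvPolynomial.eval c (E i)) = toFn n x - toFn n y} : K) = 0
    rw [← map_sub, filter_false_of_mem fun c _ hc => ?_, card_empty, Nat.cast_zero]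
    rw [hE, hfiber _ ((degree_sub_le x y).trans_lt (max_lt (hA x hx) (hA y hy)))] at hc
    exact hxy (hfree x hx y hy _ hc.symm)

theorem exists_geom_sum_mul_rpow_neg_lt {q : ℕ} (hq : 0 < q) {σ : ℝ} (hσ : σ < (q - 1) / 2) :
    ∃ z ∈ Set.Ioo (0 : ℝ) 1, (∑ j ∈ range q, z ^ j) * z ^ (-σ) < q := by
  set f : ℝ → ℝ := fun z => (∑ j ∈ range q, z ^ j) * z ^ (-σ) - q
  have hgauss : ∑ j ∈ range q, (j : ℝ) = q * (q - 1) / 2 := by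
    have h : ((∑ i ∈ range q, i : ℕ) : ℝ) * 2 = (q * (q - 1) : ℕ) := by
      exact_mod_cast sum_range_id_mul_two q
    push_cast [Nat.cast_sub hq] at h
    rw [eq_div_iff two_ne_zero, h]
  have hderiv : HasDerivAt f (q * ((q - 1) / 2 - σ)) 1 := by
    have := ((HasDerivAt.fun_sum (u := range q) fun j _ => hasDerivAt_pow j (1 : ℝ)).mul
      (Real.hasDerivAt_rpow_const (p := -σ) (Or.inl one_ne_zero))).sub_const (q : ℝ)
    refine this.congr_deriv ?_
    simp [hgauss]
    ring
  have hsign := eventually_nhdsWithin_sign_eq_of_deriv_pos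
    (hderiv.deriv ▸ mul_pos (by exact_mod_cast hq) (sub_pos.mpr hσ)) (by simp [f])
  obtain ⟨z, hz, hz01⟩ :=
    ((hsign.filter_mono nhdsWithin_le_nhds).and (Ioo_mem_nhdsLT zero_lt_one)).exists
  refine ⟨z, hz01, ?_⟩
  rw [sign_neg (sub_neg.mpr hz01.2), sign_eq_neg_one_iff] at hz
  exact sub_neg.mp hz

theorem card_lowExponents_le {q n D : ℕ} {σ z : ℝ} (hz : z ∈ Set.Ioc (0 : ℝ) 1)
    (hD : (D : ℝ) ≤ 2 * σ * n) :
    (#(lowExponents q n D) : ℝ) ≤ ((∑ j ∈ range q, z ^ j) * z ^ (-σ)) ^ n := by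
  have hlow : ∀ β ∈ lowExponents q n D, z ^ (σ * n) ≤ z ^ (∑ i, β i) := fun β hβ => by
    have hβ : (2 * ∑ i, β i : ℕ) ≤ (D : ℝ) := by exact_mod_cast (mem_filter.mp hβ).2
    rw [← Real.rpow_natCast]
    exact Real.rpow_le_rpow_of_exponent_ge hz.1 hz.2 (by push_cast at hβ ⊢; linarith)
  have hgen : ∑ β ∈ Fintype.piFinset (fun _ : Fin n => range q), z ^ (∑ i, β i) =
      (∑ j ∈ range q, z ^ j) ^ n := by
    rw [← Fin.prod_const, prod_univ_sum]
    exact sum_congr rfl fun β _ => (prod_pow_eq_pow_sum _ _ _).symm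
  calc (#(lowExponents q n D) : ℝ)
      = #(lowExponents q n D) * z ^ (σ * n) * z ^ (-(σ * n)) := by
        rw [mul_assoc, ← Real.rpow_add hz.1, add_neg_cancel, Real.rpow_zero, mul_one]
    _ ≤ (∑ j ∈ range q, z ^ j) ^ n * z ^ (-(σ * n)) := by
        refine mul_le_mul_of_nonneg_right ?_ (Real.rpow_nonneg hz.1.le _)
        rw [← hgen, ← nsmul_eq_mul]
        exact (card_nsmul_le_sum _ _ _ hlow).trans
          (sum_le_sum_of_subset_of_nonneg (filter_subset _ _) fun _ _ _ => pow_nonneg hz.1.le _)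
    _ = ((∑ j ∈ range q, z ^ j) * z ^ (-σ)) ^ n := by
        rw [mul_pow, ← Real.rpow_natCast (z ^ (-σ)), ← Real.rpow_mul hz.1.le, neg_mul]

theorem exists_lt_forall_card_lowExponents_le {q : ℕ} (hq : 0 < q) {σ : ℝ}
    (hσ : σ < (q - 1) / 2) :
    ∃ t : ℝ, t < q ∧ ∀ n D : ℕ, (D : ℝ) ≤ 2 * σ * n → (#(lowExponents q n D) : ℝ) ≤ t ^ n :=
  let ⟨_, hz, hzq⟩ := exists_geom_sum_mul_rpow_neg_lt hq hσ
  ⟨_, hzq, fun _ _ hD => card_lowExponents_le ⟨hz.1, hz.2.le⟩ hD⟩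

theorem FiniteField.natCast_ne_zero_of_coprime_card {K : Type*} [Field K] [Fintype K] {r : ℕ}
    (h : r.Coprime (Fintype.card K)) : (r : K) ≠ 0 := fun hr =>
  CharP.ringChar_ne_one <| Nat.dvd_one.mp <| h.gcd_eq_one ▸
    Nat.dvd_gcd (ringChar.dvd hr) (ringChar.dvd (FiniteField.cast_card_eq_zero K))

theorem cast_sub_one_mul_sub_div_le {q k m n : ℕ} (hq : 0 < q) (hk : 0 < k)
    (hmn : m ≤ k * n) (hnm : n ≤ k * m) :
    (((q - 1) * (k * n - m) / k : ℕ) : ℝ) ≤ (q - 1) * (1 - 1 / (k : ℝ) ^ 2) * n := by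
  have hq1 : (1 : ℝ) ≤ q := by exact_mod_cast hq
  have hk0 : (0 : ℝ) < k := by exact_mod_cast hk
  have hnkm : (n : ℝ) / k ^ 2 ≤ m / k := by
    rw [pow_two, ← div_div]
    gcongr
    rw [div_le_iff₀ (by positivity)]
    exact_mod_cast (mul_comm k m ▸ hnm)
  calc (((q - 1) * (k * n - m) / k : ℕ) : ℝ) ≤ (((q - 1) * (k * n - m) : ℕ) : ℝ) / k :=
        Nat.cast_div_le
    _ = (q - 1) * (n - m / k) := by
        push_cast [Nat.cast_sub hmn, Nat.cast_sub hq]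
        field_simp
    _ ≤ (q - 1) * (n - n / k ^ 2) := by gcongr
    _ = (q - 1) * (1 - 1 / (k : ℝ) ^ 2) * n := by ring

theorem stmt_2_general (q : ℕ) (K : Type) [Field K] [Fintype K] (hq : Fintype.card K = q)
    (F : Polynomial K) (k : ℕ) (hk : 1 ≤ k) (hdeg : F.natDegree = k)
    (hroots : Nat.Coprime (Nat.card {a : K // Polynomial.eval a F = 0}) q) :
    ∃ t : ℝ, t < q ∧ ∀ n : ℕ, 0 < n → ∀ A : Finset (Polynomial K),
      (∀ p ∈ A, p.degree < (n : WithBot ℕ)) →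
      (¬ ∃ p₁ ∈ A, ∃ p₂ ∈ A, p₁ ≠ p₂ ∧ ∃ b : Polynomial K, p₁ - p₂ = F.comp b) →
      (A.card : ℝ) ≤ 2 * t ^ n := by
  classical
  have hq1 : 1 < q := hq ▸ Fintype.one_lt_card
  have hσ : ((q : ℝ) - 1) / 2 * (1 - 1 / (k : ℝ) ^ 2) < ((q : ℝ) - 1) / 2 := by
    have : (1 : ℝ) < q := by exact_mod_cast hq1
    exact mul_lt_of_lt_one_right (by linarith) (sub_lt_self _ (by positivity))
  obtain ⟨t, htq, ht⟩ := exists_lt_forall_card_lowExponents_le (by omega) hσ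
  refine ⟨t, htq, fun n hn A hA hfree => ?_⟩
  -- the largest `m` such that `deg b < m` forces `deg F(b) < n`
  set m := n ⌈/⌉ k
  have hnm : n ≤ k * m := (ceilDiv_le_iff_le_mul hk).1 le_rfl
  have hmn : m ≤ n := (ceilDiv_le_iff_le_mul hk).2 (Nat.le_mul_of_pos_left n hk)
  have hm : 0 < m := Nat.pos_of_ne_zero fun h => by rw [h, mul_zero] at hnm; omega
  have hkm : k * (m - 1) < n := lt_of_not_ge fun h => by
    have := (ceilDiv_le_iff_le_mul hk).2 h
    omega
  rw [Nat.card_eq_fintype_card, Fintype.card_subtype, ← hq] at hroots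
  have hcard := card_le_two_mul_card_lowExponents_of_sub_eq_comp hq (hdeg ▸ hk)
    (FiniteField.natCast_ne_zero_of_coprime_card hroots) hm (hdeg ▸ hkm) A hA
    fun p₁ hp₁ p₂ hp₂ b hb => by_contra fun hne => hfree ⟨p₁, hp₁, p₂, hp₂, hne, b, hb⟩
  calc (#A : ℝ) ≤ 2 * #(lowExponents q n ((q - 1) * (k * n - m) / k)) := by
        exact_mod_cast hdeg ▸ hcard
    _ ≤ 2 * t ^ n := by
        gcongr
        exact ht n _ ((cast_sub_one_mul_sub_div_le (by omega) hk
          (hmn.trans (Nat.le_mul_of_pos_left n hk)) hnm).trans_eq (by ring))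

/-- Green's theorem (Sárközy in `𝔽_q[x]`): let `q` be a prime power, `K` the field with
`q` elements, and `F ∈ K[x]` of degree `k ≥ 1` with constant term zero, such that the
number of roots of `F` in `K` is coprime to `q`. Then there is a real constant `t < q`
such that for every `n ≥ 1`, any set `A` of polynomials of degree `< n` containing no
distinct `p₁, p₂` with `p₁ - p₂ = F(b)` for some `b ∈ K[x]` satisfies `|A| ≤ 2 tⁿ`. -/
theorem stmt_2 (q : ℕ) (K : Type) [Field K] [Fintype K] (hq : Fintype.card K = q)
    (F : Polynomial K) (k : ℕ) (hk : 1 ≤ k) (hdeg : F.natDegree = k)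
    (h0 : F.coeff 0 = 0)
    (hroots : Nat.Coprime (Nat.card {a : K // Polynomial.eval a F = 0}) q) :
    ∃ t : ℝ, t < q ∧ ∀ n : ℕ, 0 < n → ∀ A : Finset (Polynomial K),
      (∀ p ∈ A, p.degree < (n : WithBot ℕ)) →
      (¬ ∃ p₁ ∈ A, ∃ p₂ ∈ A, p₁ ≠ p₂ ∧ ∃ b : Polynomial K, p₁ - p₂ = F.comp b) →
      (A.card : ℝ) ≤ 2 * t ^ n :=
  stmt_2_general q K hq F k hk hdeg hroots
end

section
/- Let q be a prime power, m a positive integer, and S ⊆ 𝔽_q^m a nonempty subset. Then there exists a polynomial μ ∈ 𝔽_q[x₁, ..., x_m] of total degree at most |S| − 1 such that Σ_{a ∈ S} μ(a) ≠ 0. -/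
/-- For a finite field `K` (with a prime power number of elements) and a nonempty
subset `S ⊆ K^m`, there exists a polynomial `μ ∈ K[x₁, …, x_m]` of total degree at
most `|S| - 1` with `∑_{a ∈ S} μ(a) ≠ 0`. -/
theorem stmt_6 (q : ℕ) (K : Type) [Field K] [Fintype K] (hq : Fintype.card K = q)
    (m : ℕ) (hm : 0 < m) (S : Finset (Fin m → K)) (hS : S.Nonempty) :
    ∃ μ : MvPolynomial (Fin m) K, μ.totalDegree ≤ S.card - 1 ∧
      ∑ a ∈ S, MvPolynomial.eval a μ ≠ 0 := by
  classical
  obtain ⟨a, ha⟩ := hS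
  set idx : (Fin m → K) → Fin m := fun b =>
    if h : ∃ i, a i ≠ b i then h.choose else ⟨0, hm⟩ with hidxdef
  have hidx : ∀ b, a ≠ b → a (idx b) ≠ b (idx b) := by
    intro b h
    have he : ∃ i, a i ≠ b i := Function.ne_iff.mp h
    simp only [hidxdef, dif_pos he]
    exact he.choose_spec
  set μ : MvPolynomial (Fin m) K := ∏ b ∈ S.erase a,
    (MvPolynomial.C ((a (idx b) - b (idx b))⁻¹) *
      (MvPolynomial.X (idx b) - MvPolynomial.C (b (idx b)))) with hμ
  refine ⟨μ, ?_, ?_⟩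
  · calc μ.totalDegree ≤ ∑ b ∈ S.erase a,
        (MvPolynomial.C ((a (idx b) - b (idx b))⁻¹) *
          (MvPolynomial.X (idx b) - MvPolynomial.C (b (idx b)))).totalDegree :=
          MvPolynomial.totalDegree_finset_prod _ _
      _ ≤ ∑ b ∈ S.erase a, 1 := by
          refine Finset.sum_le_sum fun b _ => ?_
          refine le_trans (MvPolynomial.totalDegree_mul _ _) ?_
          simp only [MvPolynomial.totalDegree_C, zero_add]
          refine le_trans (MvPolynomial.totalDegree_sub_C_le _ _) ?_
          simp [MvPolynomial.totalDegree_X]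
      _ = (S.erase a).card := by simp
      _ ≤ S.card - 1 := by
          rw [Finset.card_erase_of_mem ha]
  · have heval_a : MvPolynomial.eval a μ = 1 := by
      rw [hμ, map_prod]
      refine Finset.prod_eq_one fun b hb => ?_
      have hne : a ≠ b := (Finset.ne_of_mem_erase hb).symm
      simp only [map_mul, map_sub, MvPolynomial.eval_C, MvPolynomial.eval_X]
      exact inv_mul_cancel₀ (sub_ne_zero.mpr (hidx b hne))
    have heval_c : ∀ c ∈ S.erase a, MvPolynomial.eval c μ = 0 := by
      intro c hc
      rw [hμ, map_prod]
      refine Finset.prod_eq_zero hc ?_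
      simp
    rw [← Finset.add_sum_erase S _ ha, heval_a,
      Finset.sum_congr rfl heval_c]
    simp
end

section
/- Let q be a prime power, d a positive integer, and m, n positive integers. Let Φ = (φ₁, ..., φ_n) : 𝔽_q^m → 𝔽_q^n be a polynomial map where each φ_i ∈ 𝔽_q[x₁, ..., x_m] has total degree at most d. Suppose there exists μ ∈ 𝔽_q[x₁, ..., x_m] with Σ_{a ∈ Φ⁻¹(0)} μ(a) ≠ 0. Then there exists a polynomial P ∈ 𝔽_q[x₁, ..., x_n] of total degree at most (q−1)(n − m/d) + deg(μ)/d such that P(0) ≠ 0 and supp(P) ⊆ im(Φ). -/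
/-!
Put `T(x, y) = μ(y) ∏ᵢ (1 - (xᵢ - φᵢ(y))^(q-1))`, a polynomial in `x` with coefficients in
`K[y]`, and `P = ∑_{a ∈ K^m} T(x, a)`. Since `t^(q-1) = 1` for `t ≠ 0`, `P(x)` is the sum of
`μ(a)` over the fibre `Φ⁻¹(x)`; so `P(0) ≠ 0` and `P` vanishes off the image of `Φ`.

For the degree, give `x` weight `d` and `y` weight `1`: every monomial `xᵅ` of `T` has a
coefficient `c_α(y)` with `deg c_α + d|α| ≤ deg μ + n d (q-1)`. This weighted degree is the
ordinary total degree of `T` after `xᵢ ↦ xᵢ^d`, read in the polynomial ring over `y ⊕ x`. The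
coefficient of `xᵅ` in `P` is `∑ₐ c_α(a)`, which vanishes unless `deg c_α ≥ m (q-1)`
(the Chevalley–Warning lemma `MvPolynomial.sum_eval_eq_zero`). Hence
`d deg P + m (q-1) ≤ deg μ + n d (q-1)`.
-/
open MvPolynomial Finset

namespace MvPolynomial

section SumVariables

variable {R σ τ : Type*} [CommSemiring R]

theorem coeff_coeff_sumAlgEquiv (F : MvPolynomial (σ ⊕ τ) R) (α : σ →₀ ℕ) (β : τ →₀ ℕ) :
    ((sumAlgEquiv R σ τ F).coeff α).coeff β = F.coeff (α.sumElim β) := by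
  simp [sumAlgEquiv, coeff, AddMonoidAlgebra.curryAlgEquiv, AddMonoidAlgebra.curryRingEquiv,
    AddMonoidAlgebra.curryAddEquiv]

theorem exists_mem_support_totalDegree_eq {p : MvPolynomial σ R} (hp : p ≠ 0) :
    ∃ β ∈ p.support, p.totalDegree = β.sum fun _ e => e :=
  exists_mem_eq_sup _ (support_nonempty.2 hp) _

theorem totalDegree_coeff_sumAlgEquiv_add_le (F : MvPolynomial (σ ⊕ τ) R) {α : σ →₀ ℕ}
    (hα : α ∈ (sumAlgEquiv R σ τ F).support) :
    ((sumAlgEquiv R σ τ F).coeff α).totalDegree + α.sum (fun _ e => e) ≤ F.totalDegree := by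
  obtain ⟨β, hβ, hdeg⟩ := exists_mem_support_totalDegree_eq (mem_support_iff.1 hα)
  have hF : α.sumElim β ∈ F.support := by
    rwa [mem_support_iff, ← coeff_coeff_sumAlgEquiv, ← mem_support_iff]
  have := le_totalDegree hF
  rw [Finsupp.sum_sumElim] at this
  rwa [hdeg, add_comm]

theorem sumAlgEquiv_symm_C (p : MvPolynomial τ R) :
    (sumAlgEquiv R σ τ).symm (C p) = rename Sum.inr p := by
  rw [AlgEquiv.symm_apply_eq]
  exact (DFunLike.congr_fun (sumAlgEquiv_comp_rename_inr R σ τ) p).symm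

theorem totalDegree_coeff_add_mul_le {d : ℕ} (hd : d ≠ 0) (T : MvPolynomial σ (MvPolynomial τ R))
    {α : σ →₀ ℕ} (hα : α ∈ T.support) :
    (T.coeff α).totalDegree + d * α.sum (fun _ e => e) ≤
      ((sumAlgEquiv R σ τ).symm (expand d T)).totalDegree := by
  have hdα : d • α ∈ (expand d T).support := by
    rwa [mem_support_iff, coeff_expand_smul d hd, ← mem_support_iff]
  have := totalDegree_coeff_sumAlgEquiv_add_le ((sumAlgEquiv R σ τ).symm (expand d T))
    (by rw [AlgEquiv.apply_symm_apply]; exact hdα)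
  rw [AlgEquiv.apply_symm_apply, coeff_expand_smul d hd] at this
  have hsmul : (d • α).sum (fun _ e => e) = d * α.sum (fun _ e => e) :=
    map_nsmul Finsupp.degree d α
  rwa [hsmul] at this

end SumVariables

section FiniteField

variable {K σ τ : Type*} [Field K] [Fintype K] [Fintype τ] [DecidableEq τ]

theorem card_sub_one_mul_card_le_totalDegree_coeff (T : MvPolynomial σ (MvPolynomial τ K))
    {α : σ →₀ ℕ} (hα : α ∈ (∑ a : τ → K, map (eval a) T).support) :
    (Fintype.card K - 1) * Fintype.card τ ≤ (T.coeff α).totalDegree := by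
  by_contra! h
  rw [mem_support_iff, coeff_sum] at hα
  simp only [coeff_map] at hα
  exact hα (sum_eval_eq_zero _ h)

theorem mul_totalDegree_sum_map_eval_add_le {d : ℕ} (hd : d ≠ 0)
    (T : MvPolynomial σ (MvPolynomial τ K)) (hT : ∑ a : τ → K, map (eval a) T ≠ 0) :
    d * (∑ a : τ → K, map (eval a) T).totalDegree + (Fintype.card K - 1) * Fintype.card τ ≤
      ((sumAlgEquiv K σ τ).symm (expand d T)).totalDegree := by
  obtain ⟨α, hα, hdeg⟩ := exists_mem_support_totalDegree_eq hT
  have hαT : α ∈ T.support :=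
    mem_support_iff.2 fun h0 => by simp [coeff_sum, coeff_map, h0] at hα
  have := totalDegree_coeff_add_mul_le hd T hαT
  have := card_sub_one_mul_card_le_totalDegree_coeff T hα
  rw [hdeg]
  omega

end FiniteField

end MvPolynomial

section FiberSum

variable {K σ τ : Type*} [Field K] [Fintype K] [Fintype σ]
  (φ : σ → MvPolynomial τ K) (μ : MvPolynomial τ K)

noncomputable def weightedFiberIndicator : MvPolynomial σ (MvPolynomial τ K) :=
  C μ * ∏ i, (1 - (X i - C (φ i)) ^ (Fintype.card K - 1))

theorem map_eval_weightedFiberIndicator (a : τ → K) :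
    map (eval a) (weightedFiberIndicator φ μ) = C (eval a μ) * indicator fun i => eval a (φ i) := by
  simp [weightedFiberIndicator, indicator]

theorem totalDegree_sumAlgEquiv_symm_expand_weightedFiberIndicator_le {d : ℕ}
    (hφ : ∀ i, (φ i).totalDegree ≤ d) :
    ((sumAlgEquiv K σ τ).symm (expand d (weightedFiberIndicator φ μ))).totalDegree ≤
      μ.totalDegree + Fintype.card σ * ((Fintype.card K - 1) * d) := by
  simp only [weightedFiberIndicator, map_mul, map_prod, map_sub, map_one, map_pow, expand_C,
    expand_X, sumAlgEquiv_symm_C, sumAlgEquiv_symm_X]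
  have hfactor : ∀ i, (1 - (X (Sum.inl i) ^ d - rename Sum.inr (φ i)) ^ (Fintype.card K - 1) :
      MvPolynomial (σ ⊕ τ) K).totalDegree ≤ (Fintype.card K - 1) * d := by
    intro i
    have hlin : (X (Sum.inl i) ^ d - rename Sum.inr (φ i)).totalDegree ≤ d :=
      (totalDegree_sub _ _).trans <| max_le (totalDegree_X_pow _ _).le
        ((totalDegree_rename_le _ _).trans (hφ i))
    refine (totalDegree_sub _ _).trans <| max_le (by simp) ?_
    exact (totalDegree_pow _ _).trans (Nat.mul_le_mul_left _ hlin)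
  refine (totalDegree_mul _ _).trans (Nat.add_le_add (totalDegree_rename_le _ _) ?_)
  refine (totalDegree_finsetProd _ _).trans ((sum_le_sum fun i _ => hfactor i).trans_eq ?_)
  rw [sum_const, card_univ, smul_eq_mul]

variable [Fintype τ] [DecidableEq τ]

noncomputable def fiberSum : MvPolynomial σ K :=
  ∑ a : τ → K, map (eval a) (weightedFiberIndicator φ μ)

theorem eval_fiberSum [DecidableEq K] (x : σ → K) :
    eval x (fiberSum φ μ) =
      ∑ a ∈ univ.filter (fun a : τ → K => (fun i => eval a (φ i)) = x), eval a μ := by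
  rw [fiberSum, map_sum, sum_filter]
  refine sum_congr rfl fun a _ => ?_
  rw [map_eval_weightedFiberIndicator, map_mul, eval_C]
  split_ifs with h
  · rw [← h, eval_indicator_apply_eq_one, mul_one]
  · rw [eval_indicator_apply_eq_zero _ _ (Ne.symm h), mul_zero]

theorem mul_totalDegree_fiberSum_add_le {d : ℕ} (hd : d ≠ 0) (hφ : ∀ i, (φ i).totalDegree ≤ d)
    (hP : fiberSum φ μ ≠ 0) :
    d * (fiberSum φ μ).totalDegree + (Fintype.card K - 1) * Fintype.card τ ≤
      μ.totalDegree + Fintype.card σ * ((Fintype.card K - 1) * d) :=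
  (mul_totalDegree_sum_map_eval_add_le hd _ hP).trans
    (totalDegree_sumAlgEquiv_symm_expand_weightedFiberIndicator_le φ μ hφ)

end FiberSum

theorem stmt_7_general (q : ℕ) (K : Type) [Field K] [Fintype K] [DecidableEq K]
    (hq : Fintype.card K = q)
    (d m n : ℕ) (hd : 0 < d)
    (φ : Fin n → MvPolynomial (Fin m) K)
    (hφ : ∀ i, (φ i).totalDegree ≤ d)
    (μ : MvPolynomial (Fin m) K)
    (hμ : ∑ a ∈ Finset.univ.filter
        (fun a : Fin m → K => (fun i => MvPolynomial.eval a (φ i)) = (0 : Fin n → K)),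
      MvPolynomial.eval a μ ≠ 0) :
    ∃ P : MvPolynomial (Fin n) K,
      (P.totalDegree : ℝ) ≤ ((q : ℝ) - 1) * ((n : ℝ) - (m : ℝ) / (d : ℝ)) +
        (μ.totalDegree : ℝ) / (d : ℝ) ∧
      MvPolynomial.eval (0 : Fin n → K) P ≠ 0 ∧
      ∀ x : Fin n → K, MvPolynomial.eval x P ≠ 0 →
        ∃ a : Fin m → K, (fun i => MvPolynomial.eval a (φ i)) = x := by
  subst hq
  have hP0 : eval 0 (fiberSum φ μ) ≠ 0 := by rwa [eval_fiberSum]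
  have hdeg := mul_totalDegree_fiberSum_add_le φ μ hd.ne' hφ fun h => hP0 (by rw [h, map_zero])
  simp only [Fintype.card_fin] at hdeg
  refine ⟨fiberSum φ μ, ?_, hP0, fun x hx => ?_⟩
  · have hdegR : (d : ℝ) * (fiberSum φ μ).totalDegree + ((Fintype.card K : ℝ) - 1) * m ≤
        μ.totalDegree + n * (((Fintype.card K : ℝ) - 1) * d) := by
      have hK : 1 ≤ Fintype.card K := Fintype.card_pos
      exact_mod_cast hdeg
    rw [show ((Fintype.card K : ℝ) - 1) * (n - m / d) + μ.totalDegree / d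
        = (((Fintype.card K : ℝ) - 1) * (n * d - m) + μ.totalDegree) / d by field_simp,
      le_div_iff₀ (by exact_mod_cast hd)]
    linarith
  · rw [eval_fiberSum] at hx
    obtain ⟨a, ha, -⟩ := exists_ne_zero_of_sum_ne_zero hx
    exact ⟨a, (mem_filter.1 ha).2⟩

/-- Key construction for the Croot–Lev–Pach method: let `K` be the field with `q`
elements, and `Φ = (φ₁, …, φ_n) : K^m → K^n` a polynomial map with each `φ i` of
total degree at most `d`. If there is `μ ∈ K[x₁, …, x_m]` with
`∑_{a ∈ Φ⁻¹(0)} μ(a) ≠ 0`, then there exists `P ∈ K[x₁, …, x_n]` of total degree at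
most `(q-1)(n - m/d) + deg(μ)/d` with `P(0) ≠ 0` and `supp(P) ⊆ im(Φ)`. -/
theorem stmt_7 (q : ℕ) (K : Type) [Field K] [Fintype K] [DecidableEq K]
    (hq : Fintype.card K = q)
    (d m n : ℕ) (hd : 0 < d) (hm : 0 < m) (hn : 0 < n)
    (φ : Fin n → MvPolynomial (Fin m) K)
    (hφ : ∀ i, (φ i).totalDegree ≤ d)
    (μ : MvPolynomial (Fin m) K)
    (hμ : ∑ a ∈ Finset.univ.filter
        (fun a : Fin m → K => (fun i => MvPolynomial.eval a (φ i)) = (0 : Fin n → K)),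
      MvPolynomial.eval a μ ≠ 0) :
    ∃ P : MvPolynomial (Fin n) K,
      (P.totalDegree : ℝ) ≤ ((q : ℝ) - 1) * ((n : ℝ) - (m : ℝ) / (d : ℝ)) +
        (μ.totalDegree : ℝ) / (d : ℝ) ∧
      MvPolynomial.eval (0 : Fin n → K) P ≠ 0 ∧
      ∀ x : Fin n → K, MvPolynomial.eval x P ≠ 0 →
        ∃ a : Fin m → K, (fun i => MvPolynomial.eval a (φ i)) = x :=
  stmt_7_general q K hq d m n hd φ hφ μ hμ
end

section
/- Let q be a prime power, n a positive integer, and P ∈ 𝔽_q[x₁, ..., x_n]. Let M be the qⁿ × qⁿ matrix over 𝔽_q with rows and columns indexed by elements of 𝔽_q^n, whose (u, v) entry is M_{uv} = P(u − v). Then rank(M) ≤ 2 · |{(α₁, ..., α_n) ∈ {0, 1, ..., q−1}ⁿ : α₁ + ⋯ + α_n ≤ deg(P)/2}|. -/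
private def redExp (q e : ℕ) : ℕ := if e = 0 then 0 else (e - 1) % (q - 1) + 1

private lemma redExp_le (q e : ℕ) : redExp q e ≤ e := by
  unfold redExp; split
  · omega
  · have := Nat.mod_le (e - 1) (q - 1); omega

private lemma redExp_lt {q : ℕ} (hq : 2 ≤ q) (e : ℕ) : redExp q e < q := by
  unfold redExp; split
  · omega
  · have := Nat.mod_lt (e - 1) (y := q - 1) (by omega); omega

private lemma pow_redExp {K : Type} [Field K] [Fintype K] {q : ℕ}
    (hq : Fintype.card K = q) (x : K) (e : ℕ) : x ^ e = x ^ redExp q e := by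
  have hq2 : 2 ≤ q := hq ▸ Fintype.one_lt_card
  rcases eq_or_ne e 0 with rfl | he
  · simp [redExp]
  rcases eq_or_ne x 0 with rfl | hx
  · rw [zero_pow he, zero_pow]
    unfold redExp; split
    · omega
    · omega
  · have h1 : x ^ (q - 1) = 1 := by
      rw [← hq]; exact FiniteField.pow_card_sub_one_eq_one x hx
    obtain ⟨t, ht⟩ : ∃ t, e = redExp q e + (q - 1) * t := by
      refine ⟨(e - 1) / (q - 1), ?_⟩
      have h2 := Nat.div_add_mod (e - 1) (q - 1)
      have h3 : redExp q e = (e - 1) % (q - 1) + 1 := by unfold redExp; split <;> omega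
      omega
    conv_lhs => rw [ht]
    rw [pow_add, pow_mul, h1, one_pow, mul_one]

/-- reduction of an exponent vector -/
private def clpRed (q : ℕ) (hq : 2 ≤ q) {n : ℕ} (γ : Fin n → ℕ) : Fin n → Fin q :=
  fun i => ⟨redExp q (γ i), redExp_lt hq (γ i)⟩

/-- Croot–Lev–Pach lemma: let `K` be the field with `q` elements,
`P ∈ K[x₁, …, x_n]`, and `M` the `qⁿ × qⁿ` matrix with entries `M u v = P(u - v)`.
Then `rank(M) ≤ 2 · |{α ∈ {0, …, q-1}ⁿ : α₁ + ⋯ + α_n ≤ deg(P)/2}|`. -/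
theorem stmt_8 (q : ℕ) (K : Type) [Field K] [Fintype K] [DecidableEq K]
    (hq : Fintype.card K = q) (n : ℕ) (hn : 0 < n)
    (P : MvPolynomial (Fin n) K)
    (M : Matrix (Fin n → K) (Fin n → K) K)
    (hM : ∀ u v, M u v = MvPolynomial.eval (u - v) P) :
    M.rank ≤ 2 * (Finset.univ.filter (fun α : Fin n → Fin q =>
      ((∑ i, (α i : ℕ)) : ℝ) ≤ (P.totalDegree : ℝ) / 2)).card := by
  classical
  have hq2 : 2 ≤ q := hq ▸ Fintype.one_lt_card
  set S : Finset (Fin n → Fin q) := Finset.univ.filter (fun α : Fin n → Fin q =>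
      ((∑ i, (α i : ℕ)) : ℝ) ≤ (P.totalDegree : ℝ) / 2) with hS
  have hSmem : ∀ α : Fin n → Fin q, 2 * ∑ i, (α i : ℕ) ≤ P.totalDegree → α ∈ S := by
    intro α h
    rw [hS, Finset.mem_filter]
    refine ⟨Finset.mem_univ _, ?_⟩
    rw [le_div_iff₀ (by norm_num : (0:ℝ) < 2)]
    exact_mod_cast (by omega : (∑ i, (α i : ℕ)) * 2 ≤ P.totalDegree)
  -- reduction facts
  have hρ_pow : ∀ (x : Fin n → K) (γ : Fin n → ℕ),
      (∏ i, x i ^ γ i) = ∏ i, x i ^ ((clpRed q hq2 γ i : ℕ)) := by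
    intro x γ
    exact Finset.prod_congr rfl fun i _ => pow_redExp hq _ _
  have hρ_sum : ∀ γ : Fin n → ℕ, (∑ i, ((clpRed q hq2 γ i : ℕ))) ≤ ∑ i, γ i :=
    fun γ => Finset.sum_le_sum fun i _ => redExp_le q (γ i)
  -- basic facts about the index set
  have hT : ∀ p ∈ (P.support.sigma fun m => Fintype.piFinset fun i => Finset.range (m i + 1)),
      (∀ i, p.2 i ≤ p.1 i) ∧ (∑ i, p.2 i) + (∑ i, (p.1 i - p.2 i)) ≤ P.totalDegree := by
    intro p hp
    rw [Finset.mem_sigma] at hp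
    obtain ⟨h1, h2⟩ := hp
    rw [Fintype.mem_piFinset] at h2
    have hle : ∀ i, p.2 i ≤ p.1 i := by
      intro i
      have := h2 i
      rw [Finset.mem_range] at this
      omega
    refine ⟨hle, ?_⟩
    have hsum : (∑ i, (p.2 i + (p.1 i - p.2 i))) = ∑ i, p.1 i :=
      Finset.sum_congr rfl fun i _ => by have := hle i; omega
    have hm : (∑ i, p.1 i) ≤ P.totalDegree := by
      have h3 := MvPolynomial.le_totalDegree h1
      rwa [Finsupp.sum_fintype _ _ (fun _ => rfl)] at h3
    calc (∑ i, p.2 i) + (∑ i, (p.1 i - p.2 i)) = ∑ i, (p.2 i + (p.1 i - p.2 i)) :=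
          (Finset.sum_add_distrib).symm
      _ = ∑ i, p.1 i := hsum
      _ ≤ P.totalDegree := hm
  -- expansion of M
  have hexp : ∀ u v, M u v =
      ∑ p ∈ (P.support.sigma fun m => Fintype.piFinset fun i => Finset.range (m i + 1)),
        (P.coeff p.1 * ∏ i, ((-1 : K) ^ (p.1 i - p.2 i) * ((p.1 i).choose (p.2 i) : K))) *
          ((∏ i, u i ^ p.2 i) * ∏ i, v i ^ (p.1 i - p.2 i)) := by
    intro u v
    rw [hM, MvPolynomial.eval_eq', Finset.sum_sigma]
    refine Finset.sum_congr rfl fun m hm => ?_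
    have hprod : (∏ i, (u - v) i ^ m i)
        = ∑ k ∈ Fintype.piFinset fun i => Finset.range (m i + 1),
            ∏ i, (u i ^ k i * ((-(v i)) ^ (m i - k i) * ((m i).choose (k i) : K))) := by
      have h0 : ∀ i : Fin n, (u - v) i ^ m i = ∑ k ∈ Finset.range (m i + 1),
          (u i ^ k * ((-(v i)) ^ (m i - k) * ((m i).choose k : K))) := by
        intro i
        have h1 : (u - v) i = u i + -(v i) := by simp [sub_eq_add_neg]
        rw [h1, add_pow]
        exact Finset.sum_congr rfl fun k hk => by ring
      calc (∏ i, (u - v) i ^ m i)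
          = ∏ i, ∑ k ∈ Finset.range (m i + 1),
              (u i ^ k * ((-(v i)) ^ (m i - k) * ((m i).choose k : K))) :=
            Finset.prod_congr rfl fun i _ => h0 i
        _ = _ := Finset.prod_univ_sum _ _
    rw [hprod, Finset.mul_sum]
    refine Finset.sum_congr rfl fun k hk => ?_
    have hneg : ∀ i, (-(v i)) ^ (m i - k i) = (-1 : K) ^ (m i - k i) * v i ^ (m i - k i) := by
      intro i; rw [neg_pow]
    simp_rw [hneg, Finset.prod_mul_distrib]
    ring
  -- the matrices
  let E : Matrix (Fin n → K) {a // a ∈ S} K :=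
    fun u α => ∏ i, u i ^ ((α : Fin n → Fin q) i : ℕ)
  let F : Matrix {a // a ∈ S} (Fin n → K) K := fun α v =>
    ∑ p ∈ ((P.support.sigma fun m => Fintype.piFinset fun i => Finset.range (m i + 1)).filter
          fun p => 2 * ∑ i, p.2 i ≤ P.totalDegree).filter
        (fun p => clpRed q hq2 p.2 = (α : Fin n → Fin q)),
      (P.coeff p.1 * ∏ i, ((-1 : K) ^ (p.1 i - p.2 i) * ((p.1 i).choose (p.2 i) : K))) *
        ∏ i, v i ^ (p.1 i - p.2 i)
  let G : Matrix (Fin n → K) {a // a ∈ S} K := fun u β =>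
    ∑ p ∈ ((P.support.sigma fun m => Fintype.piFinset fun i => Finset.range (m i + 1)).filter
          fun p => ¬ 2 * ∑ i, p.2 i ≤ P.totalDegree).filter
        (fun p => clpRed q hq2 (fun i => p.1 i - p.2 i) = (β : Fin n → Fin q)),
      (P.coeff p.1 * ∏ i, ((-1 : K) ^ (p.1 i - p.2 i) * ((p.1 i).choose (p.2 i) : K))) *
        ∏ i, u i ^ p.2 i
  let H : Matrix {a // a ∈ S} (Fin n → K) K :=
    fun β v => ∏ i, v i ^ ((β : Fin n → Fin q) i : ℕ)
  -- left part
  have hA : ∀ u v, (E * F) u v =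
      ∑ p ∈ (P.support.sigma fun m => Fintype.piFinset fun i => Finset.range (m i + 1)).filter
          (fun p => 2 * ∑ i, p.2 i ≤ P.totalDegree),
        (P.coeff p.1 * ∏ i, ((-1 : K) ^ (p.1 i - p.2 i) * ((p.1 i).choose (p.2 i) : K))) *
          ((∏ i, u i ^ p.2 i) * ∏ i, v i ^ (p.1 i - p.2 i)) := by
    intro u v
    rw [Matrix.mul_apply]
    refine (Finset.sum_coe_sort S (fun a : Fin n → Fin q =>
      (∏ i, u i ^ (a i : ℕ)) *
        ∑ p ∈ ((P.support.sigma fun m => Fintype.piFinset fun i => Finset.range (m i + 1)).filter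
              fun p => 2 * ∑ i, p.2 i ≤ P.totalDegree).filter
            (fun p => clpRed q hq2 p.2 = a),
          (P.coeff p.1 * ∏ i, ((-1 : K) ^ (p.1 i - p.2 i) * ((p.1 i).choose (p.2 i) : K))) *
            ∏ i, v i ^ (p.1 i - p.2 i))).trans ?_
    have hmaps : ∀ p ∈ (P.support.sigma fun m =>
        Fintype.piFinset fun i => Finset.range (m i + 1)).filter
          (fun p => 2 * ∑ i, p.2 i ≤ P.totalDegree), clpRed q hq2 p.2 ∈ S := by
      intro p hp
      rw [Finset.mem_filter] at hp
      exact hSmem _ (by have := hρ_sum p.2; omega)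
    refine Eq.trans ?_ (Finset.sum_fiberwise_of_maps_to hmaps
      (fun p => (P.coeff p.1 * ∏ i, ((-1 : K) ^ (p.1 i - p.2 i) * ((p.1 i).choose (p.2 i) : K))) *
          ((∏ i, u i ^ p.2 i) * ∏ i, v i ^ (p.1 i - p.2 i))))
    refine Finset.sum_congr rfl fun a ha => ?_
    rw [Finset.mul_sum]
    refine Finset.sum_congr rfl fun p hp => ?_
    have hpa : clpRed q hq2 p.2 = a := (Finset.mem_filter.mp hp).2
    rw [← hpa, ← hρ_pow u p.2]
    ring
  -- right part
  have hB : ∀ u v, (G * H) u v =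
      ∑ p ∈ (P.support.sigma fun m => Fintype.piFinset fun i => Finset.range (m i + 1)).filter
          (fun p => ¬ 2 * ∑ i, p.2 i ≤ P.totalDegree),
        (P.coeff p.1 * ∏ i, ((-1 : K) ^ (p.1 i - p.2 i) * ((p.1 i).choose (p.2 i) : K))) *
          ((∏ i, u i ^ p.2 i) * ∏ i, v i ^ (p.1 i - p.2 i)) := by
    intro u v
    rw [Matrix.mul_apply]
    refine (Finset.sum_coe_sort S (fun a : Fin n → Fin q =>
      (∑ p ∈ ((P.support.sigma fun m => Fintype.piFinset fun i => Finset.range (m i + 1)).filter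
              fun p => ¬ 2 * ∑ i, p.2 i ≤ P.totalDegree).filter
            (fun p => clpRed q hq2 (fun i => p.1 i - p.2 i) = a),
          (P.coeff p.1 * ∏ i, ((-1 : K) ^ (p.1 i - p.2 i) * ((p.1 i).choose (p.2 i) : K))) *
            ∏ i, u i ^ p.2 i) * ∏ i, v i ^ (a i : ℕ))).trans ?_
    have hmaps : ∀ p ∈ (P.support.sigma fun m =>
        Fintype.piFinset fun i => Finset.range (m i + 1)).filter
          (fun p => ¬ 2 * ∑ i, p.2 i ≤ P.totalDegree),
        clpRed q hq2 (fun i => p.1 i - p.2 i) ∈ S := by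
      intro p hp
      rw [Finset.mem_filter] at hp
      have h1 := hT p hp.1
      have h2 := hρ_sum (fun i => p.1 i - p.2 i)
      exact hSmem _ (by omega)
    refine Eq.trans ?_ (Finset.sum_fiberwise_of_maps_to hmaps
      (fun p => (P.coeff p.1 * ∏ i, ((-1 : K) ^ (p.1 i - p.2 i) * ((p.1 i).choose (p.2 i) : K))) *
          ((∏ i, u i ^ p.2 i) * ∏ i, v i ^ (p.1 i - p.2 i))))
    refine Finset.sum_congr rfl fun a ha => ?_
    rw [Finset.sum_mul]
    refine Finset.sum_congr rfl fun p hp => ?_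
    have hpa : clpRed q hq2 (fun i => p.1 i - p.2 i) = a := (Finset.mem_filter.mp hp).2
    rw [← hpa, ← hρ_pow v (fun i => p.1 i - p.2 i)]
    ring
  -- M = E * F + G * H
  have hMeq : M = E * F + G * H := by
    ext u v
    rw [Matrix.add_apply, hA, hB, hexp,
      ← Finset.sum_filter_add_sum_filter_not _ (fun p => 2 * ∑ i, p.2 i ≤ P.totalDegree)]
  -- conclude
  calc M.rank = (Matrix.fromCols E G * Matrix.fromRows F H).rank := by
        rw [Matrix.fromCols_mul_fromRows, ← hMeq]
    _ ≤ (Matrix.fromCols E G).rank := Matrix.rank_mul_le_left _ _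
    _ ≤ Fintype.card ({a // a ∈ S} ⊕ {a // a ∈ S}) := Matrix.rank_le_card_width _
    _ ≤ 2 * S.card := by
        rw [Fintype.card_sum, Fintype.card_coe]
        omega
end

section
/- Let q be a prime power and let F(T) = T^q − T + 1 ∈ 𝔽_q[T]. For a positive integer n, let A be the set of polynomials in 𝔽_q[x] of degree less than n with constant term zero. Then |A| = q^{n−1}, and there do not exist p₁, p₂ ∈ A and b ∈ 𝔽_q[x] with p₁ − p₂ = F(b). -/
open Polynomial

private lemma deg_X_mul_lt {K : Type} [Field K] {p : Polynomial K} {m : ℕ}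
    (h : p.degree < (m : WithBot ℕ)) :
    (X * p).degree < ((m + 1 : ℕ) : WithBot ℕ) := by
  rcases eq_or_ne p 0 with h0 | h0
  · rw [h0, mul_zero, degree_zero]
    exact WithBot.bot_lt_coe _
  · rw [degree_mul, degree_X, degree_eq_natDegree h0]
    have hk : p.natDegree < m := by
      rw [degree_eq_natDegree h0] at h
      exact_mod_cast h
    have : (1 + p.natDegree : ℕ) < m + 1 := by omega
    exact_mod_cast this

private lemma deg_divX_lt' {K : Type} [Field K] {a : Polynomial K} {m : ℕ}
    (ha : a.degree < ((m + 1 : ℕ) : WithBot ℕ)) (h0 : a.coeff 0 = 0) :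
    a.divX.degree < (m : WithBot ℕ) := by
  have hx : X * a.divX = a := by
    have := X_mul_divX_add a
    rwa [h0, map_zero, add_zero] at this
  rcases eq_or_ne a.divX 0 with h2 | h2
  · rw [h2, degree_zero]; exact WithBot.bot_lt_coe _
  · have hane : a ≠ 0 := fun h => h2 (by rw [h, divX_zero])
    have hda : a.degree = 1 + a.divX.degree := by
      conv_lhs => rw [← hx]
      rw [degree_mul, degree_X]
    rw [hda, degree_eq_natDegree h2] at ha
    rw [degree_eq_natDegree h2]
    have : (1 + a.divX.natDegree : ℕ) < m + 1 := by exact_mod_cast ha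
    exact_mod_cast (by omega : a.divX.natDegree < m)

private noncomputable def myEquiv (K : Type) [Field K] (m : ℕ) :
    Polynomial.degreeLT K m ≃
      {p : Polynomial K | p.degree < ((m + 1 : ℕ) : WithBot ℕ) ∧ p.coeff 0 = 0} where
  toFun p := ⟨X * p.1, deg_X_mul_lt (mem_degreeLT.1 p.2), by simp [mul_coeff_zero]⟩
  invFun a := ⟨a.1.divX, mem_degreeLT.2 (deg_divX_lt' a.2.1 a.2.2)⟩
  left_inv p := by
    apply Subtype.ext
    have h0 : (X * (p.1 : Polynomial K)).coeff 0 = 0 := by simp [mul_coeff_zero]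
    have := X_mul_divX_add (X * (p.1 : Polynomial K))
    rw [h0, map_zero, add_zero] at this
    exact mul_left_cancel₀ X_ne_zero this
  right_inv a := by
    apply Subtype.ext
    have := X_mul_divX_add (a.1 : Polynomial K)
    rwa [a.2.2, map_zero, add_zero] at this

/-- For `F(T) = T^q - T + 1` over the field `K` with `q` elements: the set `A` of
polynomials of degree `< n` with constant term zero has size `q^(n-1)`, and there
do not exist `p₁, p₂ ∈ A` and `b ∈ K[x]` with `p₁ - p₂ = F(b)`. -/
theorem stmt_11 (q : ℕ) (K : Type) [Field K] [Fintype K] (hq : Fintype.card K = q)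
    (n : ℕ) (hn : 0 < n) (A : Set (Polynomial K))
    (hA : A = {p : Polynomial K | p.degree < (n : WithBot ℕ) ∧ p.coeff 0 = 0}) :
    Nat.card A = q ^ (n - 1) ∧
      ¬ ∃ p₁ ∈ A, ∃ p₂ ∈ A, ∃ b : Polynomial K,
        p₁ - p₂ = (Polynomial.X ^ q - Polynomial.X + 1 : Polynomial K).comp b := by
  constructor
  · have hn1 : n - 1 + 1 = n := Nat.succ_pred_eq_of_pos hn
    have hA' : A = {p : Polynomial K |
        p.degree < ((n - 1 + 1 : ℕ) : WithBot ℕ) ∧ p.coeff 0 = 0} := by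
      rw [hA, hn1]
    rw [hA']
    rw [← Nat.card_congr (myEquiv K (n - 1))]
    rw [Nat.card_congr (degreeLTEquiv K (n - 1)).toEquiv]
    simp [Nat.card_eq_fintype_card, hq]
  · rintro ⟨p₁, h₁, p₂, h₂, b, hb⟩
    rw [hA] at h₁ h₂
    have h0 : (p₁ - p₂).coeff 0 = 0 := by simp [coeff_sub, h₁.2, h₂.2]
    rw [hb, coeff_zero_eq_eval_zero, eval_comp] at h0
    set c := b.eval 0 with hc
    have hpow : c ^ q - c + 1 = (0 : K) := by simpa using h0
    rw [← hq, FiniteField.pow_card] at hpow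
    simp at hpow
end

section
/- Let q be a prime power, n a positive integer, A ⊆ 𝔽_q^n a subset, and P ∈ 𝔽_q[x₁, ..., x_n] a polynomial such that P(0) ≠ 0 and P(u − v) = 0 for all distinct u, v ∈ A. Then |A| ≤ 2 · |{(α₁, ..., α_n) ∈ {0, 1, ..., q−1}ⁿ : α₁ + ⋯ + α_n ≤ deg(P)/2}|. -/
open MvPolynomial Finset

lemma clp_red_le (q k : ℕ) : (if k = 0 then 0 else (k-1) % (q-1) + 1) ≤ k := by
  split
  · omega
  · have := Nat.mod_le (k-1) (q-1); omega

lemma clp_red_lt (q k : ℕ) (hq : 2 ≤ q) : (if k = 0 then 0 else (k-1) % (q-1) + 1) < q := by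
  split
  · omega
  · have := Nat.mod_lt (k-1) (y := q-1) (by omega); omega

lemma clp_red_pow (K : Type) [Field K] [Fintype K] (q : ℕ) (hq : Fintype.card K = q)
    (x : K) (k : ℕ) : x ^ k = x ^ (if k = 0 then 0 else (k-1) % (q-1) + 1) := by
  split
  · subst ‹k = 0›; rfl
  · rename_i hk
    have hq2 : 2 ≤ q := hq ▸ Fintype.one_lt_card
    by_cases hx : x = 0
    · subst hx
      rw [zero_pow hk, zero_pow (by omega)]
    · have h1 : x ^ (q - 1) = 1 := by
        subst hq; exact FiniteField.pow_card_sub_one_eq_one x hx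
      have hk' : k = (q-1) * ((k-1) / (q-1)) + ((k-1) % (q-1) + 1) := by
        have := Nat.div_add_mod (k-1) (q-1); omega
      calc x ^ k = x ^ ((q-1) * ((k-1)/(q-1)) + ((k-1) % (q-1) + 1)) := by rw [← hk']
        _ = (x ^ (q-1)) ^ ((k-1)/(q-1)) * x ^ ((k-1) % (q-1) + 1) := by
            rw [pow_add, pow_mul]
        _ = x ^ ((k-1) % (q-1) + 1) := by rw [h1, one_pow, one_mul]

lemma clp_totalDegree_aeval_le {σ τ : Type*} {K : Type*} [CommRing K]
    (g : σ → MvPolynomial τ K) (hg : ∀ i, (g i).totalDegree ≤ 1)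
    (P : MvPolynomial σ K) :
    (MvPolynomial.aeval g P).totalDegree ≤ P.totalDegree := by
  rw [MvPolynomial.aeval_def, MvPolynomial.eval₂_eq]
  refine (MvPolynomial.totalDegree_finset_sum _ _).trans (Finset.sup_le fun m hm => ?_)
  calc (MvPolynomial.C (MvPolynomial.coeff m P) * ∏ i ∈ m.support, g i ^ m i).totalDegree
      ≤ (MvPolynomial.C (MvPolynomial.coeff m P)).totalDegree
        + (∏ i ∈ m.support, g i ^ m i).totalDegree := MvPolynomial.totalDegree_mul _ _
    _ ≤ 0 + ∑ i ∈ m.support, (g i ^ m i).totalDegree := by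
        rw [MvPolynomial.totalDegree_C]
        exact add_le_add le_rfl (MvPolynomial.totalDegree_finset_prod _ _)
    _ ≤ ∑ i ∈ m.support, m i := by
        rw [zero_add]
        refine Finset.sum_le_sum fun i _ => ?_
        calc (g i ^ m i).totalDegree ≤ m i * (g i).totalDegree :=
              MvPolynomial.totalDegree_pow _ _
          _ ≤ m i * 1 := Nat.mul_le_mul_left _ (hg i)
          _ = m i := Nat.mul_one _
    _ ≤ P.totalDegree := MvPolynomial.le_totalDegree hm

/-- Croot–Lev–Pach bound for difference-avoiding sets: let `K` be the field with
`q` elements, `A ⊆ K^n`, and `P ∈ K[x₁, …, x_n]` with `P(0) ≠ 0` and `P(u - v) = 0`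
for all distinct `u, v ∈ A`. Then
`|A| ≤ 2 · |{α ∈ {0, …, q-1}ⁿ : α₁ + ⋯ + α_n ≤ deg(P)/2}|`. -/
theorem stmt_16 (q : ℕ) (K : Type) [Field K] [Fintype K] [DecidableEq K]
    (hq : Fintype.card K = q) (n : ℕ) (hn : 0 < n)
    (A : Finset (Fin n → K)) (P : MvPolynomial (Fin n) K)
    (hP0 : MvPolynomial.eval (0 : Fin n → K) P ≠ 0)
    (hPA : ∀ u ∈ A, ∀ v ∈ A, u ≠ v → MvPolynomial.eval (u - v) P = 0) :
    A.card ≤ 2 * (Finset.univ.filter (fun α : Fin n → Fin q =>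
      ((∑ i, (α i : ℕ)) : ℝ) ≤ (P.totalDegree : ℝ) / 2)).card := by
  classical
  have hq2 : 2 ≤ q := hq ▸ Fintype.one_lt_card
  set d := P.totalDegree with hd
  set S : Finset (Fin n → Fin q) := Finset.univ.filter (fun α : Fin n → Fin q =>
      ((∑ i, (α i : ℕ)) : ℝ) ≤ (d : ℝ) / 2) with hS
  -- membership criterion for S
  have hSmem : ∀ α : Fin n → Fin q, 2 * (∑ i, (α i : ℕ)) ≤ d → α ∈ S := by
    intro α hα
    simp only [hS, Finset.mem_filter, Finset.mem_univ, true_and]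
    rw [le_div_iff₀ (by norm_num : (0:ℝ) < 2)]
    calc ((∑ i, (α i : ℕ)) : ℝ) * 2 = ((2 * ∑ i, (α i : ℕ) : ℕ) : ℝ) := by
          push_cast; ring
      _ ≤ (d : ℝ) := by exact_mod_cast hα
  -- the two-block polynomial Q(x, y) = P(x - y)
  set Q : MvPolynomial (Fin n ⊕ Fin n) K :=
    MvPolynomial.aeval (fun i => MvPolynomial.X (Sum.inl i) - MvPolynomial.X (Sum.inr i)) P
    with hQ
  have haev : ∀ (m : ℕ) (w : Fin m → K) (p : MvPolynomial (Fin m) K),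
      MvPolynomial.aeval (R := K) w p = MvPolynomial.eval w p := by
    intro m w p
    rw [← MvPolynomial.coe_aeval_eq_eval]
    rfl
  have haev2 : ∀ (w : Fin n ⊕ Fin n → K) (p : MvPolynomial (Fin n ⊕ Fin n) K),
      MvPolynomial.aeval (R := K) w p = MvPolynomial.eval w p := by
    intro w p
    rw [← MvPolynomial.coe_aeval_eq_eval]
    rfl
  have hQeval : ∀ u v : Fin n → K,
      MvPolynomial.eval (Sum.elim u v) Q = MvPolynomial.eval (u - v) P := by
    intro u v
    rw [← haev2, hQ, MvPolynomial.comp_aeval_apply, ← haev]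
    have : (fun i => (MvPolynomial.aeval (R := K) (Sum.elim u v))
        (MvPolynomial.X (Sum.inl i) - MvPolynomial.X (Sum.inr i))) = u - v := by
      funext i
      simp [Pi.sub_apply]
    rw [this]
  have hQdeg : Q.totalDegree ≤ d := by
    rw [hQ, hd]
    refine clp_totalDegree_aeval_le _ (fun i => ?_) P
    refine (MvPolynomial.totalDegree_sub _ _).trans ?_
    simp [MvPolynomial.totalDegree_X]
  -- reduction of exponents
  set r : ℕ → ℕ := fun k => if k = 0 then 0 else (k-1) % (q-1) + 1 with hr
  -- monomial functions
  set E : (Fin n → Fin q) → ((Fin n → K) → K) :=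
    fun α w => ∏ i, w i ^ (α i : ℕ) with hE
  set a : ((Fin n ⊕ Fin n) →₀ ℕ) → (Fin n → Fin q) :=
    fun m i => ⟨r (m (Sum.inl i)), clp_red_lt q _ hq2⟩ with ha
  set b : ((Fin n ⊕ Fin n) →₀ ℕ) → (Fin n → Fin q) :=
    fun m i => ⟨r (m (Sum.inr i)), clp_red_lt q _ hq2⟩ with hb
  -- every monomial evaluates via reduced exponents
  have hEa : ∀ (m : (Fin n ⊕ Fin n) →₀ ℕ) (w : Fin n → K),
      (∏ i, w i ^ (m (Sum.inl i))) = E (a m) w := by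
    intro m w
    refine Finset.prod_congr rfl fun i _ => ?_
    exact clp_red_pow K q hq (w i) (m (Sum.inl i))
  have hEb : ∀ (m : (Fin n ⊕ Fin n) →₀ ℕ) (w : Fin n → K),
      (∏ i, w i ^ (m (Sum.inr i))) = E (b m) w := by
    intro m w
    refine Finset.prod_congr rfl fun i _ => ?_
    exact clp_red_pow K q hq (w i) (m (Sum.inr i))
  -- total degree of monomials in the support of Q
  have hmdeg : ∀ m ∈ Q.support, (∑ i, m (Sum.inl i)) + (∑ i, m (Sum.inr i)) ≤ d := by
    intro m hm
    have h1 : (∑ j, m j) ≤ d := by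
      have h2 := MvPolynomial.le_totalDegree hm
      have h3 : m.sum (fun _ e => e) = ∑ j, m j :=
        Finsupp.sum_fintype _ _ (fun _ => rfl)
      calc (∑ j, m j) = m.sum (fun _ e => e) := h3.symm
        _ ≤ Q.totalDegree := h2
        _ ≤ d := hQdeg
    rwa [Fintype.sum_sum_type] at h1
  set T1 : Finset ((Fin n ⊕ Fin n) →₀ ℕ) :=
    Q.support.filter (fun m => 2 * ∑ i, m (Sum.inl i) ≤ d) with hT1
  set T2 : Finset ((Fin n ⊕ Fin n) →₀ ℕ) :=
    Q.support.filter (fun m => ¬ 2 * ∑ i, m (Sum.inl i) ≤ d) with hT2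
  have haS : ∀ m ∈ T1, a m ∈ S := by
    intro m hm
    rw [hT1, Finset.mem_filter] at hm
    refine hSmem _ ?_
    calc 2 * ∑ i, ((a m i : ℕ)) ≤ 2 * ∑ i, m (Sum.inl i) := by
          refine Nat.mul_le_mul_left _ (Finset.sum_le_sum fun i _ => ?_)
          exact clp_red_le q _
      _ ≤ d := hm.2
  have hbS : ∀ m ∈ T2, b m ∈ S := by
    intro m hm
    rw [hT2, Finset.mem_filter] at hm
    have h1 := hmdeg m hm.1
    refine hSmem _ ?_
    calc 2 * ∑ i, ((b m i : ℕ)) ≤ 2 * ∑ i, m (Sum.inr i) := by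
          refine Nat.mul_le_mul_left _ (Finset.sum_le_sum fun i _ => ?_)
          exact clp_red_le q _
      _ ≤ d := by omega
  set G : (Fin n → Fin q) → ((Fin n → K) → K) :=
    fun α w => ∑ m ∈ T1.filter (fun m => a m = α), Q.coeff m * E (b m) w with hG
  -- the key identity
  have key : ∀ u v : Fin n → K, MvPolynomial.eval (u - v) P =
      (∑ α ∈ S, E α u * G α v) +
      (∑ m ∈ T2, (Q.coeff m * E (a m) u) * E (b m) v) := by
    intro u v
    rw [← hQeval u v, MvPolynomial.eval_eq']
    have hterm : ∀ m : (Fin n ⊕ Fin n) →₀ ℕ,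
        Q.coeff m * ∏ j, Sum.elim u v j ^ m j
          = Q.coeff m * (E (a m) u * E (b m) v) := by
      intro m
      rw [Fintype.prod_sum_type]
      simp only [Sum.elim_inl, Sum.elim_inr]
      rw [hEa m u, hEb m v]
    calc (∑ m ∈ Q.support, Q.coeff m * ∏ j, Sum.elim u v j ^ m j)
        = ∑ m ∈ Q.support, Q.coeff m * (E (a m) u * E (b m) v) :=
          Finset.sum_congr rfl fun m _ => hterm m
      _ = (∑ m ∈ T1, Q.coeff m * (E (a m) u * E (b m) v)) +
          (∑ m ∈ T2, Q.coeff m * (E (a m) u * E (b m) v)) :=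
          (Finset.sum_filter_add_sum_filter_not _ _ _).symm
      _ = (∑ α ∈ S, E α u * G α v) +
          (∑ m ∈ T2, (Q.coeff m * E (a m) u) * E (b m) v) := by
          congr 1
          · rw [← Finset.sum_fiberwise_of_maps_to haS
              (fun m => Q.coeff m * (E (a m) u * E (b m) v))]
            refine Finset.sum_congr rfl fun α _ => ?_
            rw [hG, Finset.mul_sum]
            refine Finset.sum_congr rfl fun m hm => ?_
            rw [Finset.mem_filter] at hm
            rw [← hm.2]
            ring
          · exact Finset.sum_congr rfl fun m _ => by ring
  -- linear algebra: the rows are linearly independent and lie in a small span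
  set f : {x // x ∈ A} → ((Fin n → K) → K) := fun u => fun w => MvPolynomial.eval (u.1 - w) P with hf
  have hind : LinearIndependent K f := by
    rw [linearIndependent_iff']
    intro s g hsum i hi
    have h0 : ∑ j ∈ s, g j * MvPolynomial.eval (j.1 - i.1) P = 0 := by
      have h0' := congrFun hsum i.1
      simpa only [hf, Finset.sum_apply, Pi.smul_apply, smul_eq_mul, Pi.zero_apply] using h0'
    have hz : ∀ j ∈ s, j ≠ i → g j * MvPolynomial.eval (j.1 - i.1) P = 0 := by
      intro j _ hj
      rw [hPA j.1 j.2 i.1 i.2 (fun hcon => hj (Subtype.ext hcon)), mul_zero]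
    rw [Finset.sum_eq_single_of_mem i hi hz] at h0
    rw [sub_self] at h0
    exact (mul_eq_zero.mp h0).resolve_right hP0
  set W : Finset ((Fin n → K) → K) := S.image G ∪ S.image E with hW
  have hmemW : ∀ u : {x // x ∈ A}, f u ∈ Submodule.span K (W : Set ((Fin n → K) → K)) := by
    intro u
    have hfu : f u = (∑ α ∈ S, E α u.1 • G α) +
        (∑ m ∈ T2, (Q.coeff m * E (a m) u.1) • E (b m)) := by
      funext w
      simp only [hf, Pi.add_apply, Finset.sum_apply, Pi.smul_apply, smul_eq_mul]
      exact key u.1 w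
    rw [hfu]
    refine Submodule.add_mem _ (Submodule.sum_mem _ fun α hα => ?_)
      (Submodule.sum_mem _ fun m hm => ?_)
    · refine Submodule.smul_mem _ _ (Submodule.subset_span ?_)
      exact Finset.mem_coe.mpr (Finset.mem_union_left _ (Finset.mem_image_of_mem _ hα))
    · refine Submodule.smul_mem _ _ (Submodule.subset_span ?_)
      exact Finset.mem_coe.mpr (Finset.mem_union_right _ (Finset.mem_image_of_mem _ (hbS m hm)))
  set f' : {x // x ∈ A} → Submodule.span K (W : Set ((Fin n → K) → K)) := fun u => ⟨f u, hmemW u⟩ with hf'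
  have hind' : LinearIndependent K f' := by
    refine LinearIndependent.of_comp (Submodule.span K (W : Set ((Fin n → K) → K))).subtype ?_
    exact hind
  have hcard1 : A.card = Fintype.card {x // x ∈ A} := (Fintype.card_coe A).symm
  have hcard2 : Fintype.card {x // x ∈ A}
      ≤ Module.finrank K (Submodule.span K (W : Set ((Fin n → K) → K))) :=
    hind'.fintype_card_le_finrank
  have hcard3 : Module.finrank K (Submodule.span K (W : Set ((Fin n → K) → K))) ≤ W.card :=
    finrank_span_finset_le_card W
  have hcard4 : W.card ≤ 2 * S.card := by
    calc W.card ≤ (S.image G).card + (S.image E).card := Finset.card_union_le _ _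
      _ ≤ S.card + S.card := add_le_add (Finset.card_image_le) (Finset.card_image_le)
      _ = 2 * S.card := (two_mul _).symm
  omega
end

section
/- Let q be a prime power, let F ∈ 𝔽_q[x] be a polynomial of degree k ≥ 1, and let m, n be positive integers with k(m−1) ≤ n−1. Then there exist multivariate polynomials φ₀, φ₁, ..., φ_{n−1} ∈ 𝔽_q[y₀, ..., y_{m−1}], each of total degree at most min{k, (q−1)(1 + log_q k)}, such that for every (c₀, ..., c_{m−1}) ∈ 𝔽_q^m the identity F(c₀ + c₁x + ⋯ + c_{m−1}x^{m−1}) = φ₀(c₀, ..., c_{m−1}) + φ₁(c₀, ..., c_{m−1})x + ⋯ + φ_{n−1}(c₀, ..., c_{m−1})x^{n−1} holds in 𝔽_q[x]; that is, for each 0 ≤ i ≤ n−1, the coefficient of x^i in F(c₀ + c₁x + ⋯ + c_{m−1}x^{m−1}) equals φ_i(c₀, ..., c_{m−1}). -/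
/-!
Over a field `K` with `q` elements, `B ^ q = expand K q B` for every `B : K[X]`, so writing
`d = ∑ⱼ aⱼ qʲ` in base `q` gives `B ^ d = ∏ⱼ (expand K (q ^ j) B) ^ aⱼ`. For the generic
`B = ∑ᵢ yᵢ Xⁱ` every `expand (q ^ j) B` has coefficients linear in the `yᵢ`, so the coefficients of
this product have total degree at most the base-`q` digit sum of `d`. Summing over the monomials
of `F` produces the `φᵢ`, and the digit sum of `d ≤ k` is at most `d ≤ k` and at most `q - 1`
times the number of digits of `k`, which is `≤ 1 + log_q k`.
-/

open Polynomial

namespace Polynomial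

variable {R S σ : Type*}

/-- `digitsPow q [a₀, a₁, …] P = ∏ⱼ (expand R (q ^ j) P) ^ aⱼ`. -/
noncomputable def digitsPow [CommSemiring R] (q : ℕ) : List ℕ → R[X] → R[X]
  | [], _ => 1
  | a :: L, P => P ^ a * digitsPow q L (expand R q P)

theorem map_digitsPow [CommSemiring R] [CommSemiring S] (f : R →+* S) (q : ℕ) (L : List ℕ)
    (P : R[X]) : (digitsPow q L P).map f = digitsPow q L (P.map f) := by
  induction L generalizing P with
  | nil => simp [digitsPow]
  | cons a L ih => simp [digitsPow, ih, map_expand]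

theorem digitsPow_eq_pow_ofDigits [CommSemiring R] {q : ℕ} {P : R[X]}
    (hP : expand R q P = P ^ q) (L : List ℕ) : digitsPow q L P = P ^ Nat.ofDigits q L := by
  induction L generalizing P with
  | nil => simp [digitsPow]
  | cons a L ih =>
    have hP' : expand R q (expand R q P) = expand R q P ^ q := by rw [hP, map_pow, hP]
    rw [digitsPow, ih hP', hP, Nat.ofDigits_cons, pow_add, pow_mul]

section CoeffTotalDegree

variable [CommSemiring R] {P Q : (MvPolynomial σ R)[X]} {a b : ℕ}

theorem totalDegree_coeff_mul_le (hP : ∀ t, (P.coeff t).totalDegree ≤ a)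
    (hQ : ∀ t, (Q.coeff t).totalDegree ≤ b) (t : ℕ) :
    ((P * Q).coeff t).totalDegree ≤ a + b := by
  rw [coeff_mul]
  exact MvPolynomial.totalDegree_finsetSum_le fun x _ =>
    (MvPolynomial.totalDegree_mul _ _).trans (add_le_add (hP _) (hQ _))

theorem totalDegree_coeff_pow_le_s18 (hP : ∀ t, (P.coeff t).totalDegree ≤ a) (e t : ℕ) :
    ((P ^ e).coeff t).totalDegree ≤ e * a := by
  induction e generalizing t with
  | zero => rw [pow_zero, coeff_one]; split_ifs <;> simp
  | succ e ih => rw [pow_succ, Nat.succ_mul]; exact totalDegree_coeff_mul_le ih hP t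

theorem totalDegree_coeff_expand_le (hP : ∀ t, (P.coeff t).totalDegree ≤ a) (q t : ℕ) :
    ((expand _ q P).coeff t).totalDegree ≤ a := by
  rcases q.eq_zero_or_pos with rfl | hq
  · rw [expand_zero, coeff_C, eval_eq_sum]
    split_ifs
    · exact MvPolynomial.totalDegree_finsetSum_le fun n _ => by simpa using hP n
    · simp
  · rw [coeff_expand hq]
    split_ifs
    · exact hP _
    · simp

theorem totalDegree_coeff_digitsPow_le (hP : ∀ t, (P.coeff t).totalDegree ≤ a) (q : ℕ)
    (L : List ℕ) (t : ℕ) : ((digitsPow q L P).coeff t).totalDegree ≤ L.sum * a := by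
  induction L generalizing P t with
  | nil => rw [digitsPow, coeff_one]; split_ifs <;> simp
  | cons d L ih =>
    rw [digitsPow, List.sum_cons, add_mul]
    exact totalDegree_coeff_mul_le (totalDegree_coeff_pow_le_s18 hP d)
      (ih (totalDegree_coeff_expand_le hP q)) t

end CoeffTotalDegree

noncomputable def digitsComp [CommSemiring R] (q : ℕ) (F : R[X]) (G : (MvPolynomial σ R)[X]) :
    (MvPolynomial σ R)[X] :=
  F.sum fun d a => C (MvPolynomial.C a) * digitsPow q (Nat.digits q d) G

theorem map_eval_digitsComp {K : Type*} [Field K] [Fintype K] (F : K[X])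
    (G : (MvPolynomial σ K)[X]) (c : σ → K) :
    (digitsComp (Fintype.card K) F G).map (MvPolynomial.eval c) =
      F.comp (G.map (MvPolynomial.eval c)) := by
  simp only [digitsComp, Polynomial.sum, Polynomial.map_sum, Polynomial.map_mul, map_C,
    MvPolynomial.eval_C, map_digitsPow, digitsPow_eq_pow_ofDigits (FiniteField.expand_card _),
    Nat.ofDigits_digits, comp_eq_sum_left]

theorem totalDegree_coeff_digitsComp_le [CommSemiring R] {q b : ℕ} {F : R[X]}
    {G : (MvPolynomial σ R)[X]} (hG : ∀ t, (G.coeff t).totalDegree ≤ 1)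
    (hF : ∀ d ∈ F.support, (Nat.digits q d).sum ≤ b) (t : ℕ) :
    ((digitsComp q F G).coeff t).totalDegree ≤ b := by
  rw [digitsComp, Polynomial.sum, finsetSum_coeff]
  refine MvPolynomial.totalDegree_finsetSum_le fun d hd => ?_
  rw [coeff_C_mul]
  calc _ ≤ ((digitsPow q (Nat.digits q d) G).coeff t).totalDegree :=
        (MvPolynomial.totalDegree_mul _ _).trans (by simp)
    _ ≤ (Nat.digits q d).sum * 1 := totalDegree_coeff_digitsPow_le hG q _ t
    _ ≤ b := by simpa using hF d hd

noncomputable def genericPoly (K : Type*) [CommSemiring K] (m : ℕ) :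
    (MvPolynomial (Fin m) K)[X] :=
  ∑ i : Fin m, C (MvPolynomial.X i) * X ^ (i : ℕ)

theorem totalDegree_coeff_genericPoly_le {K : Type*} [CommSemiring K] (m t : ℕ) :
    ((genericPoly K m).coeff t).totalDegree ≤ 1 := by
  rw [genericPoly, finsetSum_coeff]
  refine MvPolynomial.totalDegree_finsetSum_le fun i _ => ?_
  rw [coeff_C_mul_X_pow]
  split_ifs
  · exact (MvPolynomial.totalDegree_monomial_le (Finsupp.single i 1) 1).trans (by simp)
  · simp

theorem map_eval_genericPoly {K : Type*} [CommSemiring K] {m : ℕ} (c : Fin m → K) :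
    (genericPoly K m).map (MvPolynomial.eval c) = ∑ i : Fin m, C (c i) * X ^ (i : ℕ) := by
  simp [genericPoly, Polynomial.map_sum]

end Polynomial

namespace Nat

theorem digits_sum_le_mul_length {q d k : ℕ} (hq : 1 < q) (hd : d ≤ k) :
    (digits q d).sum ≤ (q - 1) * (digits q k).length := by
  calc (digits q d).sum ≤ (digits q d).length • (q - 1) :=
        List.sum_le_card_nsmul _ _ fun x hx => le_sub_one_of_lt (digits_lt_base hq hx)
    _ ≤ (q - 1) * (digits q k).length := by
        rw [smul_eq_mul, mul_comm]; exact Nat.mul_le_mul_left _ (le_length_digits_le q d k hd)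

theorem length_digits_le_one_add_logb {q : ℕ} (hq : 1 < q) (k : ℕ) :
    ((digits q k).length : ℝ) ≤ 1 + Real.logb q k := by
  rcases eq_or_ne k 0 with rfl | hk
  · simp
  · rw [length_digits q k hq hk, cast_add, cast_one]
    linarith [Real.natLog_le_logb k q]

end Nat

theorem stmt_18_general (q : ℕ) (K : Type) [Field K] [Fintype K] (hq : Fintype.card K = q)
    (F : Polynomial K) (k : ℕ) (hdeg : F.natDegree = k)
    (m n : ℕ) (hn : 0 < n) (hmn : k * (m - 1) ≤ n - 1) :
    ∃ φ : Fin n → MvPolynomial (Fin m) K,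
      (∀ i, ((φ i).totalDegree : ℝ) ≤
        min (k : ℝ) (((q : ℝ) - 1) * (1 + Real.logb q k))) ∧
      ∀ c : Fin m → K,
        F.comp (∑ j : Fin m, Polynomial.C (c j) * Polynomial.X ^ (j : ℕ)) =
          ∑ i : Fin n, Polynomial.C (MvPolynomial.eval c (φ i)) * Polynomial.X ^ (i : ℕ) := by
  subst hq
  have hq : 1 < Fintype.card K := Fintype.one_lt_card
  have hsupp : ∀ d ∈ F.support, d ≤ k := fun d hd => hdeg ▸ le_natDegree_of_mem_supp d hd
  set Φ := digitsComp (Fintype.card K) F (genericPoly K m)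
  refine ⟨fun i => Φ.coeff i, fun i => le_min ?_ ?_, fun c => ?_⟩
  · exact_mod_cast totalDegree_coeff_digitsComp_le (totalDegree_coeff_genericPoly_le m)
      (fun d hd => (Nat.digit_sum_le _ d).trans (hsupp d hd)) i
  · calc ((Φ.coeff i).totalDegree : ℝ)
        ≤ ((Fintype.card K - 1) * (Nat.digits (Fintype.card K) k).length : ℕ) := by
          exact_mod_cast totalDegree_coeff_digitsComp_le (totalDegree_coeff_genericPoly_le m)
            (fun d hd => Nat.digits_sum_le_mul_length hq (hsupp d hd)) i
      _ ≤ _ := by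
          rw [Nat.cast_mul, Nat.cast_sub hq.le, Nat.cast_one]
          exact mul_le_mul_of_nonneg_left (Nat.length_digits_le_one_add_logb hq k)
            (sub_nonneg.2 (by exact_mod_cast hq.le))
  · set B := ∑ j : Fin m, C (c j) * X ^ (j : ℕ)
    have hB : B.natDegree ≤ m - 1 := natDegree_sum_le_of_forall_le _ _ fun j _ =>
      (natDegree_C_mul_X_pow_le (c j) j).trans (by omega)
    have hcomp : (F.comp B).natDegree < n := by
      calc (F.comp B).natDegree ≤ k * B.natDegree := hdeg ▸ natDegree_comp_le
        _ ≤ k * (m - 1) := Nat.mul_le_mul_left k hB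
        _ < n := by omega
    have hΦ : F.comp B = Φ.map (MvPolynomial.eval c) := by
      rw [map_eval_digitsComp, map_eval_genericPoly]
    rw [(F.comp B).as_sum_range_C_mul_X_pow' hcomp,
      ← Fin.sum_univ_eq_sum_range (fun i => C ((F.comp B).coeff i) * X ^ i), hΦ]
    simp only [coeff_map]

/-- Encoding composition as a polynomial map: let `K` be the field with `q` elements,
`F ∈ K[x]` of degree `k ≥ 1`, and `m, n ≥ 1` with `k(m-1) ≤ n-1`. Then there are
multivariate polynomials `φ₀, …, φ_{n-1} ∈ K[y₀, …, y_{m-1}]`, each of total degree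
at most `min {k, (q-1)(1 + log_q k)}`, such that for every `(c₀, …, c_{m-1}) ∈ K^m`,
`F(c₀ + c₁x + ⋯ + c_{m-1}x^{m-1}) = ∑_{i<n} φ_i(c₀, …, c_{m-1}) xⁱ` in `K[x]`. -/
theorem stmt_18 (q : ℕ) (K : Type) [Field K] [Fintype K] (hq : Fintype.card K = q)
    (F : Polynomial K) (k : ℕ) (hk : 1 ≤ k) (hdeg : F.natDegree = k)
    (m n : ℕ) (hm : 0 < m) (hn : 0 < n) (hmn : k * (m - 1) ≤ n - 1) :
    ∃ φ : Fin n → MvPolynomial (Fin m) K,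
      (∀ i, ((φ i).totalDegree : ℝ) ≤
        min (k : ℝ) (((q : ℝ) - 1) * (1 + Real.logb q k))) ∧
      ∀ c : Fin m → K,
        F.comp (∑ j : Fin m, Polynomial.C (c j) * Polynomial.X ^ (j : ℕ)) =
          ∑ i : Fin n, Polynomial.C (MvPolynomial.eval c (φ i)) * Polynomial.X ^ (i : ℕ) :=
  stmt_18_general q K hq F k hdeg m n hn hmn
end

section
/- Let q be a prime power, n a positive integer, and P ∈ 𝔽_q[x₁, ..., x_n] a polynomial whose degree in each individual variable is at most q−1. Let T = |{(α₁, ..., α_n) ∈ {0, 1, ..., q−1}ⁿ : α₁ + ⋯ + α_n ≤ deg(P)/2}|. Then there exist polynomials f₁, ..., f_{2T}, g₁, ..., g_{2T} ∈ 𝔽_q[x₁, ..., x_n] such that P(u − v) = Σ_{k=1}^{2T} f_k(u)·g_k(v) for all u, v ∈ 𝔽_q^n. -/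
open MvPolynomial Finset

private lemma clp_interp (n : ℕ) (K : Type) [Field K] [Fintype K] [DecidableEq K]
    (φ : (Fin n → K) → K) :
    ∃ p : MvPolynomial (Fin n) K, ∀ u, MvPolynomial.eval u p = φ u := by
  refine ⟨∑ w : Fin n → K, MvPolynomial.C (φ w) * MvPolynomial.indicator w, fun u => ?_⟩
  rw [map_sum, Finset.sum_eq_single u]
  · simp [MvPolynomial.eval_indicator_apply_eq_one]
  · intro b _ hb
    simp [MvPolynomial.eval_indicator_apply_eq_zero _ _ (Ne.symm hb)]
  · simp

private lemma clp_key (n : ℕ) (K : Type) [Field K] (P : MvPolynomial (Fin n) K)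
    (u v : Fin n → K) :
    MvPolynomial.eval (u - v) P =
      ∑ x ∈ P.support.sigma (fun m => Fintype.piFinset (fun i => Finset.range (m i + 1))),
        (MvPolynomial.coeff x.1 P * ∏ i, ((-1:K)^(x.2 i + x.1 i) * ((x.1 i).choose (x.2 i) : K)))
          * (∏ i, u i ^ (x.2 i)) * (∏ i, v i ^ (x.1 i - x.2 i)) := by
  rw [MvPolynomial.eval_eq', Finset.sum_sigma]
  apply Finset.sum_congr rfl
  intro m hm
  have h1 : ∀ i : Fin n, (u - v) i ^ m i =
      ∑ j ∈ Finset.range (m i + 1),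
        ((-1:K)^(j + m i) * u i ^ j * v i ^ (m i - j) * ((m i).choose j : K)) := by
    intro i; rw [Pi.sub_apply, sub_pow]
  rw [Finset.prod_congr rfl (fun i _ => h1 i), Finset.prod_univ_sum, Finset.mul_sum]
  apply Finset.sum_congr rfl
  intro a _
  simp_rw [Finset.prod_mul_distrib]
  ring


/-- Rank-decomposition step of the Croot–Lev–Pach lemma: let `K` be the field with
`q` elements and `P ∈ K[x₁, …, x_n]` with degree at most `q-1` in each variable.
With `T = |{α ∈ {0, …, q-1}ⁿ : α₁ + ⋯ + α_n ≤ deg(P)/2}|`, there exist polynomials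
`f₁, …, f_{2T}, g₁, …, g_{2T}` such that `P(u - v) = ∑_{k} f_k(u) g_k(v)` for all
`u, v ∈ K^n`. -/
theorem stmt_19 (q : ℕ) (K : Type) [Field K] [Fintype K] [DecidableEq K]
    (hq : Fintype.card K = q) (n : ℕ) (hn : 0 < n)
    (P : MvPolynomial (Fin n) K) (hP : ∀ i, P.degreeOf i ≤ q - 1)
    (T : ℕ)
    (hT : T = (Finset.univ.filter (fun α : Fin n → Fin q =>
      ((∑ i, (α i : ℕ)) : ℝ) ≤ (P.totalDegree : ℝ) / 2)).card) :
    ∃ f g : Fin (2 * T) → MvPolynomial (Fin n) K,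
      ∀ u v : Fin n → K, MvPolynomial.eval (u - v) P =
        ∑ k : Fin (2 * T), MvPolynomial.eval u (f k) * MvPolynomial.eval v (g k) := by
  have hq0 : 0 < q := hq ▸ Fintype.card_pos
  set d := P.totalDegree with hd
  set S : Finset (Fin n → Fin q) := Finset.univ.filter (fun α : Fin n → Fin q =>
      ((∑ i, (α i : ℕ)) : ℝ) ≤ (P.totalDegree : ℝ) / 2) with hS
  set Ξ : Finset ((_ : Fin n →₀ ℕ) × (Fin n → ℕ)) :=
    P.support.sigma (fun m => Fintype.piFinset (fun i => Finset.range (m i + 1))) with hΞ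
  set c : ((_ : Fin n →₀ ℕ) × (Fin n → ℕ)) → K := fun x =>
    MvPolynomial.coeff x.1 P * ∏ i, ((-1:K)^(x.2 i + x.1 i) * ((x.1 i).choose (x.2 i) : K))
    with hc
  -- basic bounds for members of Ξ
  have hxa : ∀ x ∈ Ξ, ∀ i, x.2 i ≤ x.1 i := by
    intro x hx i
    rw [hΞ, Finset.mem_sigma] at hx
    have := (Fintype.mem_piFinset.mp hx.2) i
    rw [Finset.mem_range] at this
    omega
  have hxq : ∀ x ∈ Ξ, ∀ i, x.1 i ≤ q - 1 := by
    intro x hx i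
    rw [hΞ, Finset.mem_sigma] at hx
    refine le_trans ?_ (hP i)
    rw [MvPolynomial.degreeOf_eq_sup]
    exact Finset.le_sup (f := fun m => m i) hx.1
  have hxd : ∀ x ∈ Ξ, (∑ i, x.2 i) + (∑ i, (x.1 i - x.2 i)) ≤ d := by
    intro x hx
    have h1 : (∑ i, x.2 i) + (∑ i, (x.1 i - x.2 i)) = ∑ i, x.1 i := by
      rw [← Finset.sum_add_distrib]
      exact Finset.sum_congr rfl (fun i _ => by have := hxa x hx i; omega)
    rw [h1]
    have hmem : x.1 ∈ P.support := by
      rw [hΞ, Finset.mem_sigma] at hx; exact hx.1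
    have h2 : (∑ i, x.1 i) = x.1.sum fun _ e => e := by
      rw [Finsupp.sum]
      exact (Finset.sum_subset (Finset.subset_univ _)
        (fun i _ hi => Finsupp.notMem_support_iff.mp hi)).symm
    rw [h2]
    exact MvPolynomial.le_totalDegree hmem
  -- the clamping map into Fin q
  have hreal : ∀ N : ℕ, 2 * N ≤ d → ((N : ℝ) ≤ (d : ℝ) / 2) := by
    intro N hN
    rw [le_div_iff₀ (by norm_num : (0:ℝ) < 2)]
    exact_mod_cast (by omega : N * 2 ≤ d)
  set κ₁ : ((_ : Fin n →₀ ℕ) × (Fin n → ℕ)) → (Fin n → Fin q) := fun x i =>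
    ⟨min (x.2 i) (q - 1), by omega⟩ with hκ₁
  set κ₂ : ((_ : Fin n →₀ ℕ) × (Fin n → ℕ)) → (Fin n → Fin q) := fun x i =>
    ⟨min (x.1 i - x.2 i) (q - 1), by omega⟩ with hκ₂
  have hκ₁v : ∀ x ∈ Ξ, ∀ i, ((κ₁ x i : ℕ)) = x.2 i := by
    intro x hx i
    simp only [hκ₁]
    exact min_eq_left (le_trans (hxa x hx i) (hxq x hx i))
  have hκ₂v : ∀ x ∈ Ξ, ∀ i, ((κ₂ x i : ℕ)) = x.1 i - x.2 i := by
    intro x hx i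
    simp only [hκ₂]
    exact min_eq_left (le_trans (Nat.sub_le _ _) (hxq x hx i))
  set Ξ₁ := Ξ.filter (fun x => 2 * ∑ i, x.2 i ≤ d) with hΞ₁
  set Ξ₂ := Ξ.filter (fun x => ¬ (2 * ∑ i, x.2 i ≤ d)) with hΞ₂
  have hmap₁ : ∀ x ∈ Ξ₁, κ₁ x ∈ S := by
    intro x hx
    rw [hΞ₁, Finset.mem_filter] at hx
    rw [hS, Finset.mem_filter]
    refine ⟨Finset.mem_univ _, ?_⟩
    have h1 : (∑ i, ((κ₁ x i : ℕ))) = ∑ i, x.2 i :=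
      Finset.sum_congr rfl (fun i _ => hκ₁v x hx.1 i)
    have h2 := hreal (∑ i, (κ₁ x i : ℕ)) (by rw [h1]; exact hx.2)
    rw [Nat.cast_sum] at h2
    exact h2
  have hmap₂ : ∀ x ∈ Ξ₂, κ₂ x ∈ S := by
    intro x hx
    rw [hΞ₂, Finset.mem_filter] at hx
    rw [hS, Finset.mem_filter]
    refine ⟨Finset.mem_univ _, ?_⟩
    have h1 : (∑ i, ((κ₂ x i : ℕ))) = ∑ i, (x.1 i - x.2 i) :=
      Finset.sum_congr rfl (fun i _ => hκ₂v x hx.1 i)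
    have h2 := hreal (∑ i, (κ₂ x i : ℕ)) (by rw [h1]; have := hxd x hx.1; omega)
    rw [Nat.cast_sum] at h2
    exact h2
  -- the polynomials
  set pU : (Fin n → Fin q) → MvPolynomial (Fin n) K := fun j => ∏ i, (X i) ^ (j i : ℕ)
    with hpU
  have hgV : ∀ j : Fin n → Fin q, ∃ p : MvPolynomial (Fin n) K, ∀ v,
      MvPolynomial.eval v p =
        ∑ x ∈ Ξ₁.filter (fun x => κ₁ x = j), c x * ∏ i, v i ^ (x.1 i - x.2 i) :=
    fun j => clp_interp n K _
  have hfU : ∀ j : Fin n → Fin q, ∃ p : MvPolynomial (Fin n) K, ∀ u,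
      MvPolynomial.eval u p =
        ∑ x ∈ Ξ₂.filter (fun x => κ₂ x = j), c x * ∏ i, u i ^ (x.2 i) :=
    fun j => clp_interp n K _
  choose gV hgVs using hgV
  choose fU hfUs using hfU
  -- index equivalence
  have hcard : Fintype.card (↥S ⊕ ↥S) = 2 * T := by
    rw [Fintype.card_sum, Fintype.card_coe, hT, hS]
    ring
  set e : (↥S ⊕ ↥S) ≃ Fin (2 * T) := Fintype.equivFinOfCardEq hcard with he
  refine ⟨fun k => Sum.elim (fun j : ↥S => pU (j : Fin n → Fin q))
            (fun j : ↥S => fU (j : Fin n → Fin q)) (e.symm k),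
          fun k => Sum.elim (fun j : ↥S => gV (j : Fin n → Fin q))
            (fun j : ↥S => pU (j : Fin n → Fin q)) (e.symm k), ?_⟩
  intro u v
  have hsum : ∑ k : Fin (2 * T),
      MvPolynomial.eval u (Sum.elim (fun j : ↥S => pU (j : Fin n → Fin q))
        (fun j : ↥S => fU (j : Fin n → Fin q)) (e.symm k)) *
      MvPolynomial.eval v (Sum.elim (fun j : ↥S => gV (j : Fin n → Fin q))
        (fun j : ↥S => pU (j : Fin n → Fin q)) (e.symm k)) =
      (∑ j ∈ S, MvPolynomial.eval u (pU j) * MvPolynomial.eval v (gV j)) +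
      (∑ j ∈ S, MvPolynomial.eval u (fU j) * MvPolynomial.eval v (pU j)) := by
    rw [Equiv.sum_comp e.symm (fun y => MvPolynomial.eval u
        (Sum.elim (fun j : ↥S => pU (j : Fin n → Fin q))
          (fun j : ↥S => fU (j : Fin n → Fin q)) y) *
        MvPolynomial.eval v (Sum.elim (fun j : ↥S => gV (j : Fin n → Fin q))
          (fun j : ↥S => pU (j : Fin n → Fin q)) y))]
    rw [Fintype.sum_sum_type]
    simp only [Sum.elim_inl, Sum.elim_inr]
    rw [Finset.sum_coe_sort S (fun j => MvPolynomial.eval u (pU j) * MvPolynomial.eval v (gV j)),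
      Finset.sum_coe_sort S (fun j => MvPolynomial.eval u (fU j) * MvPolynomial.eval v (pU j))]
  rw [hsum]
  have hevalpU : ∀ (j : Fin n → Fin q) (w : Fin n → K),
      MvPolynomial.eval w (pU j) = ∏ i, w i ^ (j i : ℕ) := by
    intro j w; rw [hpU]; simp
  -- first part
  have part1 : (∑ j ∈ S, MvPolynomial.eval u (pU j) * MvPolynomial.eval v (gV j)) =
      ∑ x ∈ Ξ₁, c x * (∏ i, u i ^ (x.2 i)) * (∏ i, v i ^ (x.1 i - x.2 i)) := by
    rw [← Finset.sum_fiberwise_of_maps_to hmap₁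
      (fun x => c x * (∏ i, u i ^ (x.2 i)) * (∏ i, v i ^ (x.1 i - x.2 i)))]
    apply Finset.sum_congr rfl
    intro j _
    rw [hevalpU, hgVs, Finset.mul_sum]
    apply Finset.sum_congr rfl
    intro x hx
    rw [Finset.mem_filter] at hx
    have hxΞ : x ∈ Ξ := (Finset.mem_filter.mp hx.1).1
    have : (∏ i, u i ^ (j i : ℕ)) = ∏ i, u i ^ (x.2 i) := by
      apply Finset.prod_congr rfl
      intro i _
      rw [← hx.2, hκ₁v x hxΞ i]
    rw [this]; ring
  have part2 : (∑ j ∈ S, MvPolynomial.eval u (fU j) * MvPolynomial.eval v (pU j)) =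
      ∑ x ∈ Ξ₂, c x * (∏ i, u i ^ (x.2 i)) * (∏ i, v i ^ (x.1 i - x.2 i)) := by
    rw [← Finset.sum_fiberwise_of_maps_to hmap₂
      (fun x => c x * (∏ i, u i ^ (x.2 i)) * (∏ i, v i ^ (x.1 i - x.2 i)))]
    apply Finset.sum_congr rfl
    intro j _
    rw [hevalpU, hfUs, Finset.sum_mul]
    apply Finset.sum_congr rfl
    intro x hx
    rw [Finset.mem_filter] at hx
    have hxΞ : x ∈ Ξ := (Finset.mem_filter.mp hx.1).1
    have : (∏ i, v i ^ (j i : ℕ)) = ∏ i, v i ^ (x.1 i - x.2 i) := by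
      apply Finset.prod_congr rfl
      intro i _
      rw [← hx.2, hκ₂v x hxΞ i]
    rw [this]
  rw [part1, part2, hΞ₁, hΞ₂,
    Finset.sum_filter_add_sum_filter_not Ξ (fun x => 2 * ∑ i, x.2 i ≤ d)]
  exact clp_key n K P u v
end
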